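/- arXiv:1309.6303 — 7 statements merged into one kernel-verified Lean document; each statement's English description precedes it below -/
import Mathlib

section
/- For every k ≥ 0, with k₀ = √(k² + m²a₀²), the regularized energy integrand at the initial time satisfies ( |χ_k'(τ₀)|² + (k² + m²a₀²)|χ_k(τ₀)|² ) − ( |χ_{k,0}'(τ₀)|² + (k² + m²a₀²)|χ_{k,0}(τ₀)|² ) = − m⁴ a₀² a'(τ₀)² / (8 (k² + m²a₀²)^{5/2}). Consequently the integral ∫₀^∞ [ ( |χ_k'(τ₀)|² + (k² + m²a₀²)|χ_k(τ₀)|² ) − ( |χ_{k,0}'(τ₀)|² + (k² + m²a₀²)|χ_{k,0}(τ₀)|² ) ] k² dk converges absolutely and equals −(m⁴ a₀² a'(τ₀)²/8) ∫₀^∞ k² (k² + m²a₀²)^{-5/2} dk, which is finite. -/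
/-!
The initial data of `χ_k` have energy exactly `k₀`: `|χ_k'|² = k₀/2 = k₀²|χ_k|²`.
Writing `χ_{k,0} = A e^{iφ}` with `A = (2ω)^{-1/2}`, `ω = √(k² + m²a²)` and `φ' = ω`,
one has `|χ_{k,0}'|² = A'² + A²ω²` and `A²ω² = ω/2 = ω²A²`, so the adiabatic energy is
`A'² + ω`. As `ω(τ₀) = k₀`, the regularized integrand is `-A'(τ₀)² = -m⁴a₀²a'(τ₀)²/(8ω⁵)`,
and `k²ω⁻⁵` decays like `k⁻³`, hence is integrable.
-/

open MeasureTheory Filter Set Topology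

noncomputable section

namespace SCE

/-- `k₀ = √(k² + a₀² m²)`. -/
def k0 (m a0 k : ℝ) : ℝ := Real.sqrt (k ^ 2 + a0 ^ 2 * m ^ 2)

/-- The initial value `χ_k(τ₀) = (2k₀)^{-1/2} e^{i k₀ τ₀}` of the modes. -/
def chiInit (m a0 τ0 k : ℝ) : ℂ :=
  (Real.sqrt (2 * k0 m a0 k) : ℂ)⁻¹ * Complex.exp (Complex.I * (k0 m a0 k) * τ0)

/-- The initial value `χ_k'(τ₀) = i k₀ (2k₀)^{-1/2} e^{i k₀ τ₀}` of the derivatives of the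
modes. -/
def chiInitDeriv (m a0 τ0 k : ℝ) : ℂ :=
  Complex.I * (k0 m a0 k) * chiInit m a0 τ0 k

/-- Parker's adiabatic modes of order zero:
`χ_{k,0}(τ) = 2^{-1/2}(k² + m²a(τ)²)^{-1/4} exp(i ∫_{τ₀}^τ √(k² + m²a(η)²) dη)`. -/
def chiAd (m τ0 : ℝ) (a : ℝ → ℝ) (k τ : ℝ) : ℂ :=
  (((Real.sqrt 2)⁻¹ * (k ^ 2 + m ^ 2 * (a τ) ^ 2) ^ (-(1 / 4) : ℝ) : ℝ) : ℂ) *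
    Complex.exp (Complex.I *
      ((∫ η in τ0..τ, Real.sqrt (k ^ 2 + m ^ 2 * (a η) ^ 2) : ℝ) : ℂ))

/-- The adiabatically regularized energy integrand at the initial time `τ₀`
(the derivative of `χ_{k,0}` being the derivative within `[τ₀,τ₁]` at `τ₀`):
`(|χ_k'(τ₀)|² + (k² + m²a₀²)|χ_k(τ₀)|²) − (|χ_{k,0}'(τ₀)|² + (k² + m²a₀²)|χ_{k,0}(τ₀)|²)`. -/
def energyDiff (m τ0 τ1 : ℝ) (a : ℝ → ℝ) (k : ℝ) : ℝ :=
  (‖chiInitDeriv m (a τ0) τ0 k‖ ^ 2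
      + (k ^ 2 + m ^ 2 * (a τ0) ^ 2) * ‖chiInit m (a τ0) τ0 k‖ ^ 2)
    - (‖derivWithin (chiAd m τ0 a k) (Set.Icc τ0 τ1) τ0‖ ^ 2
      + (k ^ 2 + m ^ 2 * (a τ0) ^ 2) * ‖chiAd m τ0 a k τ0‖ ^ 2)

theorem hasDerivWithinAt_intervalIntegral_Icc {E : Type*} [NormedAddCommGroup E]
    [NormedSpace ℝ E] [CompleteSpace E] {f : ℝ → E} {a b t : ℝ}
    (hf : ContinuousOn f (Icc a b)) (ht : t ∈ Icc a b) :
    HasDerivWithinAt (fun u => ∫ x in a..u, f x) (f t) (Icc a b) t := by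
  have := Fact.mk ht -- for the `FTCFilter t (𝓝[Icc a b] t) (𝓝[Icc a b] t)` instance
  exact intervalIntegral.integral_hasDerivWithinAt_right
    ((hf.mono (Icc_subset_Icc le_rfl ht.2)).intervalIntegrable_of_Icc ht.1)
    (hf.stronglyMeasurableAtFilter_nhdsWithin measurableSet_Icc t) (hf t ht)

theorem integrableOn_Ioi_sq_mul_add_rpow_neg {c r : ℝ} (hc : 0 < c) (hr : 3 / 2 < r) :
    IntegrableOn (fun k : ℝ => k ^ 2 * (k ^ 2 + c) ^ (-r)) (Ioi 0) := by
  have hcont : Continuous fun k : ℝ => k ^ 2 * (k ^ 2 + c) ^ (-r) :=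
    (continuous_pow 2).mul (((continuous_pow 2).add continuous_const).rpow_const
      fun k => Or.inl (add_pos_of_nonneg_of_pos (sq_nonneg k) hc).ne')
  have htail : IntegrableOn (fun k : ℝ => k ^ 2 * (k ^ 2 + c) ^ (-r)) (Ioi 1) := by
    refine (integrableOn_Ioi_rpow_of_lt (by linarith : 2 - 2 * r < -1) one_pos).mono'
      hcont.aestronglyMeasurable.restrict ?_
    filter_upwards [ae_restrict_mem measurableSet_Ioi] with k hk
    have hk0 : 0 < k := one_pos.trans hk
    rw [Real.norm_of_nonneg (by positivity)]
    calc k ^ 2 * (k ^ 2 + c) ^ (-r) ≤ k ^ 2 * (k ^ 2) ^ (-r) := by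
          gcongr ?_ * ?_
          exact Real.rpow_le_rpow_of_nonpos (by positivity) (le_add_of_nonneg_right hc.le)
            (by linarith)
      _ = k ^ (2 - 2 * r) := by
          rw [← Real.rpow_natCast, ← Real.rpow_mul hk0.le, ← Real.rpow_add hk0]
          norm_num
          ring_nf
  rw [← Ioc_union_Ioi_eq_Ioi zero_le_one]
  exact hcont.integrableOn_Ioc.union htail

theorem k0_eq_sqrt (m a0 k : ℝ) : k0 m a0 k = Real.sqrt (k ^ 2 + m ^ 2 * a0 ^ 2) := by
  rw [k0, mul_comm (a0 ^ 2)]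

theorem k0_nonneg (m a0 k : ℝ) : 0 ≤ k0 m a0 k := Real.sqrt_nonneg _

theorem norm_chiInit_sq (m a0 τ0 k : ℝ) : ‖chiInit m a0 τ0 k‖ ^ 2 = (2 * k0 m a0 k)⁻¹ := by
  have h2k0 : 0 ≤ 2 * k0 m a0 k := mul_nonneg zero_le_two (k0_nonneg _ _ _)
  rw [chiInit, norm_mul, mul_assoc, ← Complex.ofReal_mul, Complex.norm_exp_I_mul_ofReal,
    mul_one, norm_inv, Complex.norm_real, Real.norm_of_nonneg (Real.sqrt_nonneg _), inv_pow,
    Real.sq_sqrt h2k0]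

theorem initialEnergy_eq_k0 (m a0 τ0 k : ℝ) :
    ‖chiInitDeriv m a0 τ0 k‖ ^ 2 + (k ^ 2 + m ^ 2 * a0 ^ 2) * ‖chiInit m a0 τ0 k‖ ^ 2
      = k0 m a0 k := by
  have hk0 : k0 m a0 k ^ 2 = k ^ 2 + m ^ 2 * a0 ^ 2 := by
    rw [k0_eq_sqrt, Real.sq_sqrt (by positivity)]
  rw [chiInitDeriv, norm_mul, norm_mul, Complex.norm_I, one_mul, Complex.norm_real,
    Real.norm_of_nonneg (k0_nonneg _ _ _), mul_pow, ← hk0, norm_chiInit_sq]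
  rcases eq_or_ne (k0 m a0 k) 0 with h | h
  · simp [h]
  · field_simp
    ring

theorem hasDerivWithinAt_chiAd {m τ0 τ1 k τ : ℝ} {a a' : ℝ → ℝ}
    (hader : ∀ τ ∈ Icc τ0 τ1, HasDerivWithinAt a (a' τ) (Icc τ0 τ1) τ)
    (hτ : τ ∈ Icc τ0 τ1) (hX : 0 < k ^ 2 + m ^ 2 * a τ ^ 2) :
    HasDerivWithinAt (chiAd m τ0 a k)
      (((-(m ^ 2 * a τ * a' τ) / (2 * √2) * (k ^ 2 + m ^ 2 * a τ ^ 2) ^ (-(5 / 4) : ℝ) : ℝ)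
          + ((√2)⁻¹ * (k ^ 2 + m ^ 2 * a τ ^ 2) ^ (1 / 4 : ℝ) : ℝ) * Complex.I)
        * Complex.exp (Complex.I * ((∫ η in τ0..τ, √(k ^ 2 + m ^ 2 * a η ^ 2) : ℝ) : ℂ)))
      (Icc τ0 τ1) τ := by
  set X : ℝ → ℝ := fun τ => k ^ 2 + m ^ 2 * a τ ^ 2
  have hXτ : HasDerivWithinAt X (2 * m ^ 2 * a τ * a' τ) (Icc τ0 τ1) τ := by
    refine ((((hader τ hτ).pow 2).const_mul (m ^ 2)).const_add (k ^ 2)).congr_deriv ?_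
    norm_num
    ring
  have hamp := (hXτ.rpow_const (p := -(1 / 4)) (Or.inl hX.ne')).const_mul (√2)⁻¹
  have hω : ContinuousOn (fun η => √(X η)) (Icc τ0 τ1) :=
    (continuousOn_const.add (continuousOn_const.mul
      (ContinuousOn.pow (fun η hη => (hader η hη).continuousWithinAt) 2))).sqrt
  have hphase := hasDerivWithinAt_intervalIntegral_Icc hω hτ
  have hamp' : (√2)⁻¹ * (2 * m ^ 2 * a τ * a' τ * (-(1 / 4)) * X τ ^ (-(1 / 4) - 1 : ℝ))
      = -(m ^ 2 * a τ * a' τ) / (2 * √2) * X τ ^ (-(5 / 4) : ℝ) := by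
    norm_num
    ring
  have hampω : X τ ^ (-(1 / 4) : ℝ) * √(X τ) = X τ ^ (1 / 4 : ℝ) := by
    rw [Real.sqrt_eq_rpow, ← Real.rpow_add hX]
    congr 1
    norm_num
  refine (hamp.ofReal_comp.mul (hphase.ofReal_comp.const_mul Complex.I).cexp).congr_deriv ?_
  rw [← hamp', ← hampω]
  push_cast
  ring

theorem adiabaticEnergy_eq {m τ0 τ1 k τ : ℝ} {a a' : ℝ → ℝ}
    (hader : ∀ τ ∈ Icc τ0 τ1, HasDerivWithinAt a (a' τ) (Icc τ0 τ1) τ) (hτ01 : τ0 < τ1)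
    (hτ : τ ∈ Icc τ0 τ1) (hX : 0 < k ^ 2 + m ^ 2 * a τ ^ 2) :
    ‖derivWithin (chiAd m τ0 a k) (Icc τ0 τ1) τ‖ ^ 2
        + (k ^ 2 + m ^ 2 * a τ ^ 2) * ‖chiAd m τ0 a k τ‖ ^ 2
      = m ^ 4 * a τ ^ 2 * a' τ ^ 2 / (8 * (k ^ 2 + m ^ 2 * a τ ^ 2) ^ (5 / 2 : ℝ))
        + √(k ^ 2 + m ^ 2 * a τ ^ 2) := by
  rw [(hasDerivWithinAt_chiAd hader hτ hX).derivWithin (uniqueDiffOn_Icc hτ01 τ hτ), chiAd,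
    norm_mul, norm_mul, Complex.norm_exp_I_mul_ofReal, mul_one, mul_one, Complex.sq_norm,
    Complex.normSq_add_mul_I, Complex.norm_real, Real.norm_eq_abs, sq_abs]
  set X := k ^ 2 + m ^ 2 * a τ ^ 2
  have hsq (r : ℝ) : (X ^ r) ^ 2 = X ^ (2 * r) := by
    rw [← Real.rpow_natCast, ← Real.rpow_mul hX.le, mul_comm]
    norm_num
  simp only [mul_pow, div_pow, inv_pow, neg_sq, hsq, Real.sq_sqrt zero_le_two]
  have h52 : X ^ (2 * -(5 / 4) : ℝ) = (X ^ (5 / 2 : ℝ))⁻¹ := by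
    rw [← Real.rpow_neg hX.le]
    norm_num
  have h14 : X ^ (2 * (1 / 4) : ℝ) = √X := by
    rw [Real.sqrt_eq_rpow]
    norm_num
  have h14' : X * X ^ (2 * -(1 / 4) : ℝ) = √X := by
    rw [Real.sqrt_eq_rpow, ← Real.rpow_one_add' hX.le (by norm_num)]
    norm_num
  rw [h52, h14, mul_left_comm X, h14']
  field_simp
  ring

theorem energyDiff_eq {m τ0 τ1 k : ℝ} {a a' : ℝ → ℝ}
    (hader : ∀ τ ∈ Icc τ0 τ1, HasDerivWithinAt a (a' τ) (Icc τ0 τ1) τ) (hτ01 : τ0 < τ1)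
    (hX : 0 < k ^ 2 + m ^ 2 * a τ0 ^ 2) :
    energyDiff m τ0 τ1 a k
      = -(m ^ 4 * a τ0 ^ 2 * a' τ0 ^ 2) / (8 * (k ^ 2 + m ^ 2 * a τ0 ^ 2) ^ (5 / 2 : ℝ)) := by
  rw [energyDiff, initialEnergy_eq_k0, adiabaticEnergy_eq hader hτ01 ⟨le_rfl, hτ01.le⟩ hX,
    k0_eq_sqrt]
  ring

theorem energy_density_finite_general (m τ0 τ1 : ℝ) (hm : 0 < m) (hτ : τ0 < τ1)
    (a a' : ℝ → ℝ)
    (hader : ∀ τ ∈ Set.Icc τ0 τ1, HasDerivWithinAt a (a' τ) (Set.Icc τ0 τ1) τ)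
    (hapos : ∀ τ ∈ Set.Icc τ0 τ1, 0 < a τ) :
    (∀ k : ℝ, 0 ≤ k →
      HasDerivWithinAt (chiAd m τ0 a k)
          (derivWithin (chiAd m τ0 a k) (Set.Icc τ0 τ1) τ0) (Set.Icc τ0 τ1) τ0 ∧
      energyDiff m τ0 τ1 a k
        = -(m ^ 4 * (a τ0) ^ 2 * (a' τ0) ^ 2)
            / (8 * (k ^ 2 + m ^ 2 * (a τ0) ^ 2) ^ ((5 : ℝ) / 2))) ∧
    IntegrableOn (fun k => energyDiff m τ0 τ1 a k * k ^ 2) (Set.Ioi (0 : ℝ)) ∧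
    (∫ k in Set.Ioi (0 : ℝ), energyDiff m τ0 τ1 a k * k ^ 2)
      = -(m ^ 4 * (a τ0) ^ 2 * (a' τ0) ^ 2 / 8) *
          ∫ k in Set.Ioi (0 : ℝ), k ^ 2 * (k ^ 2 + m ^ 2 * (a τ0) ^ 2) ^ (-(5 : ℝ) / 2) ∧
    IntegrableOn (fun k => k ^ 2 * (k ^ 2 + m ^ 2 * (a τ0) ^ 2) ^ (-(5 : ℝ) / 2))
      (Set.Ioi (0 : ℝ)) := by
  have hτ0 : τ0 ∈ Icc τ0 τ1 := ⟨le_rfl, hτ.le⟩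
  have hc : 0 < m ^ 2 * a τ0 ^ 2 := by
    have := hapos τ0 hτ0
    positivity
  have hX (k : ℝ) : 0 < k ^ 2 + m ^ 2 * a τ0 ^ 2 := by positivity
  have hint : IntegrableOn (fun k => k ^ 2 * (k ^ 2 + m ^ 2 * a τ0 ^ 2) ^ (-(5 : ℝ) / 2))
      (Ioi 0) := by
    simpa only [neg_div] using integrableOn_Ioi_sq_mul_add_rpow_neg hc (r := 5 / 2) (by norm_num)
  have hintegrand : EqOn (fun k => energyDiff m τ0 τ1 a k * k ^ 2)
      (fun k => -(m ^ 4 * a τ0 ^ 2 * a' τ0 ^ 2 / 8) *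
        (k ^ 2 * (k ^ 2 + m ^ 2 * a τ0 ^ 2) ^ (-(5 : ℝ) / 2))) (Ioi 0) := fun k _ => by
    dsimp only
    rw [energyDiff_eq hader hτ (hX k), neg_div _ (5 : ℝ), Real.rpow_neg (hX k).le]
    ring
  refine ⟨fun k _ => ⟨?_, energyDiff_eq hader hτ (hX k)⟩,
    IntegrableOn.congr_fun (hint.const_mul _) hintegrand.symm measurableSet_Ioi, ?_, hint⟩
  · exact (hasDerivWithinAt_chiAd hader hτ0 (hX k)).differentiableWithinAt.hasDerivWithinAt
  · rw [setIntegral_congr_fun measurableSet_Ioi hintegrand, integral_const_mul]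

/-- **Finiteness of the energy density at the initial time** (Pinamonti–Siemssen,
Proposition 2.3): the regularized energy integrand at `τ₀` equals
`−m⁴a₀²a'(τ₀)²/(8(k² + m²a₀²)^{5/2})`, hence
`∫₀^∞ (…) k² dk` converges absolutely and equals
`−(m⁴a₀²a'(τ₀)²/8) ∫₀^∞ k²(k² + m²a₀²)^{-5/2} dk`, which is finite. -/
theorem energy_density_finite (m τ0 τ1 : ℝ) (hm : 0 < m) (hτ : τ0 < τ1)
    (a a' : ℝ → ℝ)
    (hader : ∀ τ ∈ Set.Icc τ0 τ1, HasDerivWithinAt a (a' τ) (Set.Icc τ0 τ1) τ)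
    (ha'cont : ContinuousOn a' (Set.Icc τ0 τ1))
    (hapos : ∀ τ ∈ Set.Icc τ0 τ1, 0 < a τ) :
    (∀ k : ℝ, 0 ≤ k →
      HasDerivWithinAt (chiAd m τ0 a k)
          (derivWithin (chiAd m τ0 a k) (Set.Icc τ0 τ1) τ0) (Set.Icc τ0 τ1) τ0 ∧
      energyDiff m τ0 τ1 a k
        = -(m ^ 4 * (a τ0) ^ 2 * (a' τ0) ^ 2)
            / (8 * (k ^ 2 + m ^ 2 * (a τ0) ^ 2) ^ ((5 : ℝ) / 2))) ∧
    IntegrableOn (fun k => energyDiff m τ0 τ1 a k * k ^ 2) (Set.Ioi (0 : ℝ)) ∧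
    (∫ k in Set.Ioi (0 : ℝ), energyDiff m τ0 τ1 a k * k ^ 2)
      = -(m ^ 4 * (a τ0) ^ 2 * (a' τ0) ^ 2 / 8) *
          ∫ k in Set.Ioi (0 : ℝ), k ^ 2 * (k ^ 2 + m ^ 2 * (a τ0) ^ 2) ^ (-(5 : ℝ) / 2) ∧
    IntegrableOn (fun k => k ^ 2 * (k ^ 2 + m ^ 2 * (a τ0) ^ 2) ^ (-(5 : ℝ) / 2))
      (Set.Ioi (0 : ℝ)) :=
  energy_density_finite_general m τ0 τ1 hm hτ a a' hader hapos

end SCE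
end
end

section
/- Suppose U ⊆ C[a,b] is nonempty and closed, F(U) ⊆ U, and there exists K ≥ 0 such that ‖f(X) − f(Y)‖_{C[a,t]} ≤ K ‖X − Y‖_{C[a,t]} for all X, Y ∈ U and all t ∈ [a,b]. Then there exists N ∈ ℕ such that for every n ≥ N the n-fold iterate Fⁿ is a contraction on U, i.e., there is c ∈ (0,1) with ‖Fⁿ(X) − Fⁿ(Y)‖_{C[a,b]} ≤ c ‖X − Y‖_{C[a,b]} for all X, Y ∈ U; in consequence F has a unique fixed point in U. -/
/-!
Picard's estimate: integrating the Lipschitz bound inductively gives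
`‖Fⁿ X − Fⁿ Y‖_{C[a,t]} ≤ Kⁿ (t − a)ⁿ / n! · ‖X − Y‖`. Since `(K (b − a))ⁿ / n! → 0`, all
sufficiently high iterates of `F` are `1/2`-contractions, and Banach's fixed point theorem for one
of them on the complete set `U` yields the unique fixed point of `F`.
-/

open MeasureTheory Filter Set Topology

noncomputable section

namespace Volterra

/-- A map `f : C[a,b] → C[a,b]` is *retarded* if, whenever two functions agree on `[a,t]`,
their images under `f` agree on `[a,t]`. -/
def Retarded (a b : ℝ) (f : C(Set.Icc a b, ℝ) → C(Set.Icc a b, ℝ)) : Prop :=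
  ∀ X Y : C(Set.Icc a b, ℝ), ∀ t ∈ Set.Icc a b,
    (∀ s : Set.Icc a b, (s : ℝ) ≤ t → X s = Y s) →
      ∀ s : Set.Icc a b, (s : ℝ) ≤ t → f X s = f Y s

/-- The Volterra-type map `F(X)(t) = F₀(t) + ∫_a^t f(X)(s) ds` on `C[a,b]`. -/
def Fmap (a b : ℝ) (hab : a ≤ b) (F0 : C(Set.Icc a b, ℝ))
    (f : C(Set.Icc a b, ℝ) → C(Set.Icc a b, ℝ)) (X : C(Set.Icc a b, ℝ)) :
    C(Set.Icc a b, ℝ) :=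
  ⟨fun t => F0 t + ∫ s in a..(t : ℝ), Set.IccExtend hab ⇑(f X) s, by
    refine F0.continuous.add ?_
    have hg : Continuous (Set.IccExtend hab ⇑(f X)) := (f X).continuous.Icc_extend'
    exact (intervalIntegral.continuous_primitive (fun c d => hg.intervalIntegrable c d) a).comp
      continuous_subtype_val⟩

/-- Restriction of a continuous function on `[a,b]` to `[a,t]` (using the continuous
extension to `ℝ`, which agrees with the original function on `[a,b]`). -/
def restrictTo (a b t : ℝ) (hab : a ≤ b) (X : C(Set.Icc a b, ℝ)) : C(Set.Icc a t, ℝ) :=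
  ⟨fun s => Set.IccExtend hab ⇑X s, (X.continuous.Icc_extend').comp continuous_subtype_val⟩

/-- The sup norm `‖X‖_{C[a,t]}` of `X ∈ C[a,b]` over the part of `[a,b]` with `s ≤ t`. -/
def normOn (a b t : ℝ) (X : C(Set.Icc a b, ℝ)) : ℝ :=
  sSup {r : ℝ | ∃ s : Set.Icc a b, (s : ℝ) ≤ t ∧ r = |X s|}

end Volterra

open NNReal

namespace Volterra

variable {a b : ℝ}

lemma normOn_le {t M : ℝ} (X : C(Icc a b, ℝ)) (hM : 0 ≤ M)
    (h : ∀ s : Icc a b, (s : ℝ) ≤ t → |X s| ≤ M) : normOn a b t X ≤ M :=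
  Real.sSup_le (by rintro r ⟨s, hs, rfl⟩; exact h s hs) hM

lemma abs_le_normOn {t : ℝ} (X : C(Icc a b, ℝ)) (s : Icc a b) (hs : (s : ℝ) ≤ t) :
    |X s| ≤ normOn a b t X := by
  refine le_csSup ⟨‖X‖, ?_⟩ ⟨s, hs, rfl⟩
  rintro r ⟨s, -, rfl⟩
  exact X.norm_coe_le_norm s

lemma normOn_le_norm (t : ℝ) (X : C(Icc a b, ℝ)) : normOn a b t X ≤ ‖X‖ :=
  normOn_le X (norm_nonneg X) fun s _ => X.norm_coe_le_norm s

lemma norm_eq_normOn (hab : a ≤ b) (X : C(Icc a b, ℝ)) : ‖X‖ = normOn a b b X := by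
  have hnonneg : 0 ≤ normOn a b b X := (abs_nonneg _).trans (abs_le_normOn X ⟨a, le_rfl, hab⟩ hab)
  refine le_antisymm ((ContinuousMap.norm_le X hnonneg).2 fun s => ?_) (normOn_le_norm b X)
  exact abs_le_normOn X s s.2.2

lemma integral_sub_pow (a s : ℝ) (n : ℕ) :
    ∫ u in a..s, (u - a) ^ n = (s - a) ^ (n + 1) / (n + 1) := by
  simp [intervalIntegral.integral_comp_sub_right (fun u => u ^ n) a, integral_pow]

section Fmap

variable (hab : a ≤ b) (F0 : C(Icc a b, ℝ)) (f : C(Icc a b, ℝ) → C(Icc a b, ℝ))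

lemma Fmap_sub_Fmap_apply (X Y : C(Icc a b, ℝ)) (s : Icc a b) :
    (Fmap a b hab F0 f X - Fmap a b hab F0 f Y) s =
      ∫ u in a..(s : ℝ), (IccExtend hab (f X) u - IccExtend hab (f Y) u) := by
  rw [intervalIntegral.integral_sub ((f X).continuous.Icc_extend'.intervalIntegrable _ _)
    ((f Y).continuous.Icc_extend'.intervalIntegrable _ _)]
  simp only [ContinuousMap.sub_apply, Fmap, ContinuousMap.coe_mk]
  ring

lemma abs_Fmap_sub_Fmap_apply_le (X Y : C(Icc a b, ℝ)) {C : ℝ} {n : ℕ}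
    (h : ∀ u ∈ Icc a b, normOn a b u (f X - f Y) ≤ C * (u - a) ^ n) (s : Icc a b) :
    |(Fmap a b hab F0 f X - Fmap a b hab F0 f Y) s| ≤ C * ((s : ℝ) - a) ^ (n + 1) / (n + 1) := by
  have hsa : a ≤ (s : ℝ) := s.2.1
  have hcont : Continuous fun u => IccExtend hab (f X) u - IccExtend hab (f Y) u :=
    (f X).continuous.Icc_extend'.sub (f Y).continuous.Icc_extend'
  have hbound : ∀ u ∈ Icc a (s : ℝ),
      |IccExtend hab (f X) u - IccExtend hab (f Y) u| ≤ C * (u - a) ^ n := by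
    intro u hu
    have hub : u ∈ Icc a b := ⟨hu.1, hu.2.trans s.2.2⟩
    rw [IccExtend_of_mem hab _ hub, IccExtend_of_mem hab _ hub]
    exact (abs_le_normOn (f X - f Y) ⟨u, hub⟩ le_rfl).trans (h u hub)
  rw [Fmap_sub_Fmap_apply]
  calc |∫ u in a..(s : ℝ), (IccExtend hab (f X) u - IccExtend hab (f Y) u)|
      ≤ ∫ u in a..(s : ℝ), |IccExtend hab (f X) u - IccExtend hab (f Y) u| :=
        intervalIntegral.abs_integral_le_integral_abs hsa
    _ ≤ ∫ u in a..(s : ℝ), C * (u - a) ^ n :=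
        intervalIntegral.integral_mono_on hsa (hcont.abs.intervalIntegrable _ _)
          ((by fun_prop : Continuous fun u : ℝ => C * (u - a) ^ n).intervalIntegrable _ _) hbound
    _ = C * ((s : ℝ) - a) ^ (n + 1) / (n + 1) := by
        rw [intervalIntegral.integral_const_mul, integral_sub_pow, mul_div_assoc]

lemma normOn_iterate_Fmap_sub_le {U : Set C(Icc a b, ℝ)} (hinv : MapsTo (Fmap a b hab F0 f) U U)
    {K : ℝ} (hK : 0 ≤ K)
    (hLip : ∀ X ∈ U, ∀ Y ∈ U, ∀ t ∈ Icc a b,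
      normOn a b t (f X - f Y) ≤ K * normOn a b t (X - Y))
    (n : ℕ) {X Y : C(Icc a b, ℝ)} (hX : X ∈ U) (hY : Y ∈ U) {t : ℝ} (ht : a ≤ t) :
    normOn a b t ((Fmap a b hab F0 f)^[n] X - (Fmap a b hab F0 f)^[n] Y) ≤
      K ^ n * (t - a) ^ n / n.factorial * ‖X - Y‖ := by
  induction n generalizing t with
  | zero => simpa using normOn_le_norm t (X - Y)
  | succ n ih =>
    set G := Fmap a b hab F0 f
    have hta : 0 ≤ t - a := sub_nonneg.2 ht
    have hLipIter : ∀ u ∈ Icc a b, normOn a b u (f (G^[n] X) - f (G^[n] Y)) ≤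
        K ^ (n + 1) / n.factorial * ‖X - Y‖ * (u - a) ^ n := fun u hu =>
      calc normOn a b u (f (G^[n] X) - f (G^[n] Y))
          ≤ K * normOn a b u (G^[n] X - G^[n] Y) :=
            hLip _ (hinv.iterate n hX) _ (hinv.iterate n hY) u hu
        _ ≤ K * (K ^ n * (u - a) ^ n / n.factorial * ‖X - Y‖) := by gcongr; exact ih hu.1
        _ = K ^ (n + 1) / n.factorial * ‖X - Y‖ * (u - a) ^ n := by ring
    rw [Function.iterate_succ_apply', Function.iterate_succ_apply']
    refine normOn_le _ (by positivity) fun s hst => ?_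
    have hsa : 0 ≤ (s : ℝ) - a := sub_nonneg.2 s.2.1
    calc |(G (G^[n] X) - G (G^[n] Y)) s|
        ≤ K ^ (n + 1) / n.factorial * ‖X - Y‖ * ((s : ℝ) - a) ^ (n + 1) / (n + 1) :=
          abs_Fmap_sub_Fmap_apply_le hab F0 f _ _ hLipIter s
      _ ≤ K ^ (n + 1) / n.factorial * ‖X - Y‖ * (t - a) ^ (n + 1) / (n + 1) := by
          gcongr
      _ = K ^ (n + 1) * (t - a) ^ (n + 1) / (n + 1).factorial * ‖X - Y‖ := by
          rw [Nat.factorial_succ]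
          push_cast
          field_simp

lemma norm_iterate_Fmap_sub_le {U : Set C(Icc a b, ℝ)} (hinv : MapsTo (Fmap a b hab F0 f) U U)
    {K : ℝ} (hK : 0 ≤ K)
    (hLip : ∀ X ∈ U, ∀ Y ∈ U, ∀ t ∈ Icc a b,
      normOn a b t (f X - f Y) ≤ K * normOn a b t (X - Y))
    (n : ℕ) {X Y : C(Icc a b, ℝ)} (hX : X ∈ U) (hY : Y ∈ U) :
    ‖(Fmap a b hab F0 f)^[n] X - (Fmap a b hab F0 f)^[n] Y‖ ≤
      (K * (b - a)) ^ n / n.factorial * ‖X - Y‖ := by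
  rw [norm_eq_normOn hab, mul_pow]
  exact normOn_iterate_Fmap_sub_le hab F0 f hinv hK hLip n hX hY hab

end Fmap

theorem exists_unique_fixed_of_iterate_contracting {α : Type*} [MetricSpace α] {G : α → α}
    {U : Set α} (hne : U.Nonempty) (hU : IsComplete U) (hG : MapsTo G U U) {n : ℕ} {c : ℝ≥0}
    (hc : c < 1) (h : ∀ x ∈ U, ∀ y ∈ U, dist (G^[n] x) (G^[n] y) ≤ c * dist x y) :
    ∃! x, x ∈ U ∧ G x = x := by
  have := hne.to_subtype
  have := hU.completeSpace_coe
  set g := hG.restrict G U U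
  have hg : ContractingWith c g^[n] := by
    refine ⟨hc, LipschitzWith.of_dist_le_mul fun x y => ?_⟩
    simpa only [Subtype.dist_eq, g, hG.coe_iterate_restrict] using h x x.2 y y.2
  refine ⟨_, ⟨(hg.fixedPoint _).2, congrArg Subtype.val hg.isFixedPt_fixedPoint_iterate⟩, ?_⟩
  rintro y ⟨hy, hGy⟩
  have hfix : Function.IsFixedPt g ⟨y, hy⟩ := Subtype.ext hGy
  exact congrArg Subtype.val (hg.fixedPoint_unique (hfix.iterate n))

theorem iterate_contraction_and_unique_fixed_point_general
    (a b : ℝ) (hab : a < b) (F0 : C(Set.Icc a b, ℝ))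
    (f : C(Set.Icc a b, ℝ) → C(Set.Icc a b, ℝ))
    (U : Set C(Set.Icc a b, ℝ)) (hne : U.Nonempty) (hclosed : IsClosed U)
    (hinv : Set.MapsTo (Fmap a b hab.le F0 f) U U)
    (K : ℝ) (hK : 0 ≤ K)
    (hLip : ∀ X ∈ U, ∀ Y ∈ U, ∀ t ∈ Set.Icc a b,
      normOn a b t (f X - f Y) ≤ K * normOn a b t (X - Y)) :
    (∃ N : ℕ, ∀ n : ℕ, N ≤ n → ∃ c ∈ Set.Ioo (0:ℝ) 1,
        ∀ X ∈ U, ∀ Y ∈ U,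
          ‖(Fmap a b hab.le F0 f)^[n] X - (Fmap a b hab.le F0 f)^[n] Y‖ ≤ c * ‖X - Y‖) ∧
      ∃! X : C(Set.Icc a b, ℝ), X ∈ U ∧ Fmap a b hab.le F0 f X = X := by
  set G := Fmap a b hab.le F0 f
  obtain ⟨N, hN⟩ : ∃ N : ℕ, ∀ n ≥ N, (K * (b - a)) ^ n / n.factorial < 2⁻¹ :=
    eventually_atTop.1 ((FloorSemiring.tendsto_pow_div_factorial_atTop _).eventually
      (gt_mem_nhds (by norm_num)))
  have hcontr : ∀ n ≥ N, ∀ X ∈ U, ∀ Y ∈ U, ‖G^[n] X - G^[n] Y‖ ≤ 2⁻¹ * ‖X - Y‖ :=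
    fun n hn X hX Y hY => (norm_iterate_Fmap_sub_le hab.le F0 f hinv hK hLip n hX hY).trans
      (mul_le_mul_of_nonneg_right (hN n hn).le (norm_nonneg _))
  refine ⟨⟨N, fun n hn => ⟨2⁻¹, by norm_num, hcontr n hn⟩⟩, ?_⟩
  refine exists_unique_fixed_of_iterate_contracting hne hclosed.isComplete hinv (n := N)
    (c := 2⁻¹) (by norm_num) fun X hX Y hY => ?_
  simpa [dist_eq_norm] using hcontr N le_rfl X hX Y hY

/-- **Iterates of the Volterra map are eventually contractions.**
If `U ⊆ C[a,b]` is nonempty and closed, `F(U) ⊆ U`, and `f` satisfies the retarded Lipschitz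
estimate `‖f(X) − f(Y)‖_{C[a,t]} ≤ K ‖X − Y‖_{C[a,t]}` on `U`, then some iterate `Fⁿ` (for all
`n` large enough) is a contraction on `U`, and consequently `F` has a unique fixed point
in `U`. -/
theorem iterate_contraction_and_unique_fixed_point
    (a b : ℝ) (hab : a < b) (F0 : C(Set.Icc a b, ℝ))
    (f : C(Set.Icc a b, ℝ) → C(Set.Icc a b, ℝ)) (hf : Retarded a b f)
    (U : Set C(Set.Icc a b, ℝ)) (hne : U.Nonempty) (hclosed : IsClosed U)
    (hinv : Set.MapsTo (Fmap a b hab.le F0 f) U U)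
    (K : ℝ) (hK : 0 ≤ K)
    (hLip : ∀ X ∈ U, ∀ Y ∈ U, ∀ t ∈ Set.Icc a b,
      normOn a b t (f X - f Y) ≤ K * normOn a b t (X - Y)) :
    (∃ N : ℕ, ∀ n : ℕ, N ≤ n → ∃ c ∈ Set.Ioo (0:ℝ) 1,
        ∀ X ∈ U, ∀ Y ∈ U,
          ‖(Fmap a b hab.le F0 f)^[n] X - (Fmap a b hab.le F0 f)^[n] Y‖ ≤ c * ‖X - Y‖) ∧
      ∃! X : C(Set.Icc a b, ℝ), X ∈ U ∧ Fmap a b hab.le F0 f X = X :=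
  iterate_contraction_and_unique_fixed_point_general a b hab F0 f U hne hclosed hinv K hK hLip

end Volterra
end
end

section
/- For every n ≥ 0, every integer l with 0 ≤ l ≤ n, and every τ ∈ [τ₀, τ₁], the mode functions satisfy the bound |χⁿ(τ)| ≤ (2k₀)^{-1/2} (n!)^{-1} ( k₀^{-1} ∫_{τ₀}^τ |V(η)| dη )^l ( ∫_{τ₀}^τ (τ − η) |V(η)| dη )^{n−l}. -/
open MeasureTheory Filter Set Topology

noncomputable section

namespace Modes

/-- The perturbative mode functions: `χ⁰(τ) = (2k₀)^{-1/2} e^{i k₀ τ}` and, recursively,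
`χⁿ(τ) = ∫_{τ₀}^τ k₀⁻¹ sin(k₀(η−τ)) V(η) χ^{n−1}(η) dη`. -/
def chi (k0 τ0 : ℝ) (V : ℝ → ℝ) : ℕ → ℝ → ℂ
  | 0 => fun τ => (Real.sqrt (2 * k0) : ℂ)⁻¹ * Complex.exp (Complex.I * k0 * τ)
  | n + 1 => fun τ =>
      ∫ η in τ0..τ, ((k0⁻¹ * Real.sin (k0 * (η - τ)) * V η : ℝ) : ℂ) * chi k0 τ0 V n η

end Modes

/-!
Bound the kernel by `|k₀⁻¹ sin (k₀ (η - τ))| ≤ min (k₀⁻¹, τ - η)` and put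
`W_τ(η) = ∫_{τ₀}^η min (k₀⁻¹, τ - s) |V s| ds`. Since `W_η(η) ≤ W_τ(η)` for `η ≤ τ`, induction gives
`|χⁿ(τ)| ≤ (2k₀)^{-1/2} W_τ(τ)ⁿ / n!`, the step being `∫_{τ₀}^τ W_τ' W_τⁿ / n! = W_τ(τ)ⁿ⁺¹ / (n+1)!`.
Finally `W_τ(τ)` is at most each of the two integrals of the statement, so `W_τ(τ)ⁿ` is at most
`(k₀⁻¹ ∫ |V|)ˡ (∫ (τ - η) |V|)ⁿ⁻ˡ`.
-/

open MeasureTheory Set intervalIntegral Real Nat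

namespace Modes

theorem pow_le_pow_mul_pow_sub {R : Type*} [CommSemiring R] [PartialOrder R] [IsOrderedRing R]
    {x a b : R} {l n : ℕ} (hx : 0 ≤ x) (ha : x ≤ a) (hb : x ≤ b) (hl : l ≤ n) :
    x ^ n ≤ a ^ l * b ^ (n - l) :=
  calc x ^ n = x ^ l * x ^ (n - l) := by rw [← pow_add, Nat.add_sub_cancel' hl]
    _ ≤ a ^ l * b ^ (n - l) :=
      mul_le_mul (pow_le_pow_left₀ hx ha l) (pow_le_pow_left₀ hx hb _) (pow_nonneg hx _)
        (pow_nonneg (hx.trans ha) _)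

theorem abs_inv_mul_sin_mul_le {k : ℝ} (hk : 0 < k) (t : ℝ) :
    |k⁻¹ * sin (k * t)| ≤ min k⁻¹ |t| := by
  have hk' : 0 < k⁻¹ := inv_pos.mpr hk
  rw [abs_mul, abs_of_pos hk']
  refine le_min (mul_le_of_le_one_right hk'.le (abs_sin_le_one _)) ?_
  calc k⁻¹ * |sin (k * t)| ≤ k⁻¹ * |k * t| := mul_le_mul_of_nonneg_left abs_sin_le_abs hk'.le
    _ = |t| := by rw [abs_mul, abs_of_pos hk, inv_mul_cancel_left₀ hk.ne']

theorem integral_primitive_pow_mul {w : ℝ → ℝ} (hw : Continuous w) (a b : ℝ) (n : ℕ) :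
    ∫ x in a..b, (∫ t in a..x, w t) ^ n * w x = (∫ t in a..b, w t) ^ (n + 1) / (n + 1) := by
  simpa [integral_pow] using integral_comp_mul_deriv (a := a) (b := b) (g := fun y => y ^ n)
    (fun x _ => (hw.integral_hasStrictDerivAt a x).hasDerivAt) hw.continuousOn (continuous_pow n)

def weight (k0 : ℝ) (V : ℝ → ℝ) (τ s : ℝ) : ℝ := min k0⁻¹ (τ - s) * |V s|

section

variable {k0 τ0 : ℝ} {V : ℝ → ℝ}

theorem weight_nonneg (hk : 0 ≤ k0) {τ s : ℝ} (hs : s ≤ τ) : 0 ≤ weight k0 V τ s :=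
  mul_nonneg (le_min (inv_nonneg.mpr hk) (sub_nonneg.mpr hs)) (abs_nonneg _)

theorem weight_mono {η τ : ℝ} (h : η ≤ τ) (s : ℝ) : weight k0 V η s ≤ weight k0 V τ s :=
  mul_le_mul_of_nonneg_right (min_le_min le_rfl (sub_le_sub_right h s)) (abs_nonneg _)

theorem continuous_weight (hV : Continuous V) (τ : ℝ) : Continuous (weight k0 V τ) := by
  unfold weight; fun_prop

theorem integral_weight_nonneg (hk : 0 ≤ k0) {η τ : ℝ} (hη : τ0 ≤ η) (hητ : η ≤ τ) :
    0 ≤ ∫ s in τ0..η, weight k0 V τ s :=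
  integral_nonneg hη fun _ hs => weight_nonneg hk (hs.2.trans hητ)

theorem integral_weight_le_inv_mul (hV : Continuous V) {τ : ℝ} (hτ : τ0 ≤ τ) :
    ∫ s in τ0..τ, weight k0 V τ s ≤ k0⁻¹ * ∫ s in τ0..τ, |V s| := by
  rw [← intervalIntegral.integral_const_mul]
  exact integral_mono_on hτ ((continuous_weight hV τ).intervalIntegrable _ _)
    ((by fun_prop : Continuous fun s => k0⁻¹ * |V s|).intervalIntegrable _ _)
    fun s _ => mul_le_mul_of_nonneg_right (min_le_left _ _) (abs_nonneg _)

theorem integral_weight_le_integral_sub_mul (hV : Continuous V) {τ : ℝ} (hτ : τ0 ≤ τ) :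
    ∫ s in τ0..τ, weight k0 V τ s ≤ ∫ s in τ0..τ, (τ - s) * |V s| :=
  integral_mono_on hτ ((continuous_weight hV τ).intervalIntegrable _ _)
    ((by fun_prop : Continuous fun s => (τ - s) * |V s|).intervalIntegrable _ _)
    fun s _ => mul_le_mul_of_nonneg_right (min_le_right _ _) (abs_nonneg _)

theorem chi_congr {V' : ℝ → ℝ} (n : ℕ) {τ : ℝ} (h : EqOn V V' (uIcc τ0 τ)) :
    chi k0 τ0 V n τ = chi k0 τ0 V' n τ := by
  induction n generalizing τ with
  | zero => rfl
  | succ n ih =>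
    refine integral_congr fun η hη => ?_
    simp only [h hη, ih (h.mono (uIcc_subset_uIcc_left hη))]

theorem norm_chi_zero (τ : ℝ) : ‖chi k0 τ0 V 0 τ‖ = (√(2 * k0))⁻¹ := by
  have : Complex.I * k0 * τ = ((k0 * τ : ℝ) : ℂ) * Complex.I := by push_cast; ring
  simp only [chi, this, norm_mul, Complex.norm_exp_ofReal_mul_I, mul_one, norm_inv,
    Complex.norm_real, norm_eq_abs, abs_of_nonneg (sqrt_nonneg _)]

theorem norm_chi_le_integral_weight_pow (hk : 0 < k0) (hV : Continuous V) (n : ℕ)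
    {τ : ℝ} (hτ : τ0 ≤ τ) :
    ‖chi k0 τ0 V n τ‖ ≤ (√(2 * k0))⁻¹ * (n ! : ℝ)⁻¹ * (∫ s in τ0..τ, weight k0 V τ s) ^ n := by
  induction n generalizing τ with
  | zero => simp [norm_chi_zero]
  | succ n ih =>
    set C := (√(2 * k0))⁻¹ * (n ! : ℝ)⁻¹
    have hpoint : ∀ η ∈ Ioc τ0 τ,
        ‖((k0⁻¹ * sin (k0 * (η - τ)) * V η : ℝ) : ℂ) * chi k0 τ0 V n η‖ ≤
          C * ((∫ s in τ0..η, weight k0 V τ s) ^ n * weight k0 V τ η) := by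
      rintro η ⟨hη, hητ⟩
      have hker : |k0⁻¹ * sin (k0 * (η - τ))| ≤ min k0⁻¹ (τ - η) := by
        simpa [abs_sub_comm, abs_of_nonneg (sub_nonneg.mpr hητ)]
          using abs_inv_mul_sin_mul_le hk (η - τ)
      have hmass : ∫ s in τ0..η, weight k0 V η s ≤ ∫ s in τ0..η, weight k0 V τ s :=
        integral_mono_on hη.le ((continuous_weight hV η).intervalIntegrable _ _)
          ((continuous_weight hV τ).intervalIntegrable _ _) fun s _ => weight_mono hητ s
      have hchi : ‖chi k0 τ0 V n η‖ ≤ C * (∫ s in τ0..η, weight k0 V τ s) ^ n :=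
        (ih hη.le).trans <| mul_le_mul_of_nonneg_left
          (pow_le_pow_left₀ (integral_weight_nonneg hk.le hη.le le_rfl) hmass n) (by positivity)
      rw [norm_mul, Complex.norm_real, norm_eq_abs, abs_mul]
      calc _ ≤ weight k0 V τ η * (C * (∫ s in τ0..η, weight k0 V τ s) ^ n) :=
            mul_le_mul (mul_le_mul_of_nonneg_right hker (abs_nonneg _)) hchi (norm_nonneg _)
              (weight_nonneg hk.le hητ)
        _ = _ := by ring
    have hint : Continuous fun η => C * ((∫ s in τ0..η, weight k0 V τ s) ^ n * weight k0 V τ η) :=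
      continuous_const.mul (((continuous_primitive
        (fun a b => (continuous_weight hV τ).intervalIntegrable a b) τ0).pow n).mul
          (continuous_weight hV τ))
    calc ‖chi k0 τ0 V (n + 1) τ‖
        ≤ ∫ η in τ0..τ, C * ((∫ s in τ0..η, weight k0 V τ s) ^ n * weight k0 V τ η) :=
          norm_integral_le_of_norm_le hτ (ae_of_all _ hpoint) (hint.intervalIntegrable _ _)
      _ = C * ((∫ s in τ0..τ, weight k0 V τ s) ^ (n + 1) / (n + 1)) := by
          rw [intervalIntegral.integral_const_mul,
            integral_primitive_pow_mul (continuous_weight hV τ)]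
      _ = _ := by
          simp only [C, factorial_succ, cast_mul, cast_succ]
          field_simp

theorem norm_chi_le (hk : 0 < k0) (hV : Continuous V) {n l : ℕ} (hl : l ≤ n)
    {τ : ℝ} (hτ : τ0 ≤ τ) :
    ‖chi k0 τ0 V n τ‖ ≤ (√(2 * k0))⁻¹ * (n ! : ℝ)⁻¹ * (k0⁻¹ * ∫ η in τ0..τ, |V η|) ^ l *
      (∫ η in τ0..τ, (τ - η) * |V η|) ^ (n - l) := by
  rw [mul_assoc _ (_ ^ l)]
  exact (norm_chi_le_integral_weight_pow hk hV n hτ).trans <| mul_le_mul_of_nonneg_left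
    (pow_le_pow_mul_pow_sub (integral_weight_nonneg hk.le hτ le_rfl)
      (integral_weight_le_inv_mul hV hτ) (integral_weight_le_integral_sub_mul hV hτ) hl)
    (by positivity)

end

theorem chi_bound_general (τ0 τ1 k0 : ℝ) (hk0 : 0 < k0)
    (V : ℝ → ℝ) (hV : ContinuousOn V (Set.Icc τ0 τ1)) :
    ∀ n l : ℕ, l ≤ n → ∀ τ ∈ Set.Icc τ0 τ1,
      ‖chi k0 τ0 V n τ‖ ≤
        (Real.sqrt (2 * k0))⁻¹ * ((n.factorial : ℝ))⁻¹ *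
          (k0⁻¹ * ∫ η in τ0..τ, |V η|) ^ l *
          (∫ η in τ0..τ, (τ - η) * |V η|) ^ (n - l) := by
  intro n l hl τ hτ
  have hsub : uIcc τ0 τ ⊆ Icc τ0 τ1 := uIcc_of_le hτ.1 ▸ Icc_subset_Icc_right hτ.2
  set g := IccExtend (hτ.1.trans hτ.2) ((Icc τ0 τ1).domRestrict V)
  have hg : Continuous g := (continuousOn_iff_continuous_domRestrict.mp hV).Icc_extend'
  have hgV : EqOn g V (uIcc τ0 τ) := fun η hη => IccExtend_of_mem _ _ (hsub hη)
  have hbound := norm_chi_le hk0 hg hl hτ.1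
  rwa [chi_congr n hgV, integral_congr fun η hη => congrArg abs (hgV hη),
    integral_congr fun η hη => congrArg ((τ - η) * |·|) (hgV hη)] at hbound

/-- **Bound on the perturbative modes** (eq. (10) of Pinamonti–Siemssen):
`|χⁿ(τ)| ≤ (2k₀)^{-1/2} (n!)⁻¹ (k₀⁻¹ ∫|V|)^l (∫(τ−η)|V|)^{n−l}` for every `0 ≤ l ≤ n`. -/
theorem chi_bound (τ0 τ1 k0 : ℝ) (hτ : τ0 < τ1) (hk0 : 0 < k0)
    (V : ℝ → ℝ) (hV : ContinuousOn V (Set.Icc τ0 τ1)) :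
    ∀ n l : ℕ, l ≤ n → ∀ τ ∈ Set.Icc τ0 τ1,
      ‖chi k0 τ0 V n τ‖ ≤
        (Real.sqrt (2 * k0))⁻¹ * ((n.factorial : ℝ))⁻¹ *
          (k0⁻¹ * ∫ η in τ0..τ, |V η|) ^ l *
          (∫ η in τ0..τ, (τ - η) * |V η|) ^ (n - l) :=
  chi_bound_general τ0 τ1 k0 hk0 V hV

end Modes
end
end

section
/- Assume in addition that V is continuously differentiable with V(τ₀) = 0. Then for every τ ∈ [τ₀, τ₁]: χ⁰(τ) · conj(χ¹(τ)) + χ¹(τ) · conj(χ⁰(τ)) = (2k₀²)^{-1} ∫_{τ₀}^τ sin(2k₀(η−τ)) V(η) dη = − V(τ)/(4k₀³) + (4k₀³)^{-1} ∫_{τ₀}^τ cos(2k₀(η−τ)) V'(η) dη. -/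
/-!
Since `χ⁰(τ) conj(χ⁰(η)) = (2k₀)⁻¹ e^{i k₀ (τ - η)}`, the sum `χ⁰ conj(χ¹) + χ¹ conj(χ⁰)`, being
twice the real part of its first summand, is `∫ k₀⁻² sin(k₀(η-τ)) cos(k₀(η-τ)) V(η) dη`, and the
double-angle formula gives the first expression. The second one follows by integrating by parts
against the primitive `-cos(2k₀(η-τ))/(2k₀)` of `sin(2k₀(η-τ))`, the boundary term at `τ₀`
vanishing because `V(τ₀) = 0`.
-/

open MeasureTheory Filter Set Topology

noncomputable section

namespace Modes

open Complex ComplexConjugate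
open scoped Interval

lemma chi_zero_mul_conj_chi_zero {k0 : ℝ} (hk0 : 0 ≤ k0) (τ0 : ℝ) (V : ℝ → ℝ) (τ η : ℝ) :
    chi k0 τ0 V 0 τ * conj (chi k0 τ0 V 0 η) = ((2 * k0)⁻¹ : ℝ) * exp ((k0 * (τ - η) : ℝ) * I) := by
  have hsqrt : ((Real.sqrt (2 * k0) : ℂ))⁻¹ * (Real.sqrt (2 * k0) : ℂ)⁻¹ = ((2 * k0)⁻¹ : ℝ) := by
    rw [← mul_inv]; norm_cast; rw [Real.mul_self_sqrt (by positivity)]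
  simp only [chi, map_mul, map_inv₀, conj_ofReal, ← exp_conj, conj_I]
  rw [mul_mul_mul_comm, hsqrt, ← exp_add]
  push_cast
  ring_nf

lemma chi_zero_mul_conj_chi_one {k0 : ℝ} (hk0 : 0 ≤ k0) (τ0 : ℝ) (V : ℝ → ℝ) (τ : ℝ) :
    chi k0 τ0 V 0 τ * conj (chi k0 τ0 V 1 τ) =
      ∫ η in τ0..τ, (k0⁻¹ * Real.sin (k0 * (η - τ)) * V η * (2 * k0)⁻¹) •
        exp ((k0 * (τ - η) : ℝ) * I) := by
  rw [chi.eq_2, ← intervalIntegral.intervalIntegral_conj, ← intervalIntegral.integral_const_mul]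
  refine intervalIntegral.integral_congr fun η _ => ?_
  rw [map_mul, conj_ofReal, mul_left_comm, chi_zero_mul_conj_chi_zero hk0, real_smul]
  push_cast
  ring

lemma chi_zero_mul_conj_chi_one_add_chi_one_mul_conj_chi_zero {k0 : ℝ} (hk0 : 0 < k0)
    {τ0 τ : ℝ} {V : ℝ → ℝ} (hV : IntervalIntegrable V volume τ0 τ) :
    chi k0 τ0 V 0 τ * conj (chi k0 τ0 V 1 τ) + chi k0 τ0 V 1 τ * conj (chi k0 τ0 V 0 τ) =
      (((2 * k0 ^ 2)⁻¹ * ∫ η in τ0..τ, Real.sin (2 * k0 * (η - τ)) * V η : ℝ) : ℂ) := by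
  have hconj : chi k0 τ0 V 1 τ * conj (chi k0 τ0 V 0 τ) =
      conj (chi k0 τ0 V 0 τ * conj (chi k0 τ0 V 1 τ)) := by
    rw [map_mul, conj_conj, mul_comm]
  have hintegrable : IntervalIntegrable
      (fun η => (k0⁻¹ * Real.sin (k0 * (η - τ)) * V η * (2 * k0)⁻¹) • exp ((k0 * (τ - η) : ℝ) * I))
      volume τ0 τ :=
    ((hV.continuousOn_mul (by fun_prop)).mul_const _).smul_continuousOn (by fun_prop)
  rw [hconj, add_conj, chi_zero_mul_conj_chi_one hk0.le, ← RCLike.re_to_complex,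
    ← intervalIntegral.intervalIntegral_re hintegrable]
  congr 1
  simp only [RCLike.re_to_complex, smul_re, exp_ofReal_mul_I_re, smul_eq_mul]
  rw [← intervalIntegral.integral_const_mul, ← intervalIntegral.integral_const_mul]
  refine intervalIntegral.integral_congr fun η _ => ?_
  have hcos : Real.cos (k0 * (τ - η)) = Real.cos (k0 * (η - τ)) := by
    rw [← Real.cos_neg]; ring_nf
  rw [hcos, show 2 * k0 * (η - τ) = 2 * (k0 * (η - τ)) by ring, Real.sin_two_mul]
  field_simp

lemma integral_sin_mul_eq_of_hasDerivWithinAt {a b ω : ℝ} (hω : ω ≠ 0) {V V' : ℝ → ℝ}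
    (hV : ∀ x ∈ [[a, b]], HasDerivWithinAt V (V' x) [[a, b]] x)
    (hV' : IntervalIntegrable V' volume a b) :
    ∫ x in a..b, Real.sin (ω * (x - b)) * V x =
      (V a * Real.cos (ω * (a - b)) - V b) / ω +
        ω⁻¹ * ∫ x in a..b, Real.cos (ω * (x - b)) * V' x := by
  have hprim :
      ∀ x, HasDerivAt (fun x => -Real.cos (ω * (x - b)) / ω) (Real.sin (ω * (x - b))) x := by
    intro x
    refine ((((hasDerivAt_id x).sub_const b).const_mul ω).cos.neg.div_const ω).congr_deriv ?_
    field_simp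
    rfl
  have hparts := intervalIntegral.integral_mul_deriv_eq_deriv_mul_of_hasDerivWithinAt hV
    (fun x _ => (hprim x).hasDerivWithinAt) hV'
    ((by fun_prop : Continuous fun x => Real.sin (ω * (x - b))).intervalIntegrable a b)
  simp only [sub_self, mul_zero, Real.cos_zero] at hparts
  simp_rw [mul_comm (Real.sin _)]
  rw [hparts, sub_eq_add_neg _ (∫ _ in a..b, _), ← intervalIntegral.integral_neg,
    ← intervalIntegral.integral_const_mul]
  congr 1
  · field_simp
    ring
  · congr 1 with x
    ring

theorem first_order_term_general (τ0 τ1 k0 : ℝ) (hk0 : 0 < k0)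
    (V V' : ℝ → ℝ)
    (hVder : ∀ τ ∈ Set.Icc τ0 τ1, HasDerivWithinAt V (V' τ) (Set.Icc τ0 τ1) τ)
    (hV'cont : ContinuousOn V' (Set.Icc τ0 τ1))
    (hV0 : V τ0 = 0) :
    ∀ τ ∈ Set.Icc τ0 τ1,
      chi k0 τ0 V 0 τ * (starRingEnd ℂ) (chi k0 τ0 V 1 τ)
          + chi k0 τ0 V 1 τ * (starRingEnd ℂ) (chi k0 τ0 V 0 τ)
        = (((2 * k0 ^ 2)⁻¹ * ∫ η in τ0..τ, Real.sin (2 * k0 * (η - τ)) * V η : ℝ) : ℂ) ∧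
      chi k0 τ0 V 0 τ * (starRingEnd ℂ) (chi k0 τ0 V 1 τ)
          + chi k0 τ0 V 1 τ * (starRingEnd ℂ) (chi k0 τ0 V 0 τ)
        = ((-(V τ) / (4 * k0 ^ 3)
            + (4 * k0 ^ 3)⁻¹ * ∫ η in τ0..τ, Real.cos (2 * k0 * (η - τ)) * V' η : ℝ) : ℂ) := by
  rintro τ ⟨hτ0, hτ1⟩
  have hsub : [[τ0, τ]] ⊆ Icc τ0 τ1 := uIcc_of_le hτ0 ▸ Icc_subset_Icc_right hτ1
  have hV : ∀ x ∈ [[τ0, τ]], HasDerivWithinAt V (V' x) [[τ0, τ]] x :=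
    fun x hx => (hVder x (hsub hx)).mono hsub
  have hfirst := chi_zero_mul_conj_chi_one_add_chi_one_mul_conj_chi_zero hk0
    (ContinuousOn.intervalIntegrable fun x hx => (hV x hx).continuousWithinAt)
  refine ⟨hfirst, ?_⟩
  rw [hfirst, integral_sin_mul_eq_of_hasDerivWithinAt (by positivity) hV
    (hV'cont.mono hsub).intervalIntegrable, hV0]
  congr 1
  field_simp
  ring

/-- **The first-order term of the mode expansion** (first order computation in
Pinamonti–Siemssen, Proposition 2.1): for `V` continuously differentiable with `V(τ₀) = 0`,
`χ⁰ conj(χ¹) + χ¹ conj(χ⁰) = (2k₀²)⁻¹ ∫ sin(2k₀(η−τ)) V(η) dη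
  = −V(τ)/(4k₀³) + (4k₀³)⁻¹ ∫ cos(2k₀(η−τ)) V'(η) dη`. -/
theorem first_order_term (τ0 τ1 k0 : ℝ) (hτ : τ0 < τ1) (hk0 : 0 < k0)
    (V V' : ℝ → ℝ)
    (hVder : ∀ τ ∈ Set.Icc τ0 τ1, HasDerivWithinAt V (V' τ) (Set.Icc τ0 τ1) τ)
    (hV'cont : ContinuousOn V' (Set.Icc τ0 τ1))
    (hV0 : V τ0 = 0) :
    ∀ τ ∈ Set.Icc τ0 τ1,
      chi k0 τ0 V 0 τ * (starRingEnd ℂ) (chi k0 τ0 V 1 τ)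
          + chi k0 τ0 V 1 τ * (starRingEnd ℂ) (chi k0 τ0 V 0 τ)
        = (((2 * k0 ^ 2)⁻¹ * ∫ η in τ0..τ, Real.sin (2 * k0 * (η - τ)) * V η : ℝ) : ℂ) ∧
      chi k0 τ0 V 0 τ * (starRingEnd ℂ) (chi k0 τ0 V 1 τ)
          + chi k0 τ0 V 1 τ * (starRingEnd ℂ) (chi k0 τ0 V 0 τ)
        = ((-(V τ) / (4 * k0 ^ 3)
            + (4 * k0 ^ 3)⁻¹ * ∫ η in τ0..τ, Real.cos (2 * k0 * (η - τ)) * V' η : ℝ) : ℂ) :=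
  first_order_term_general τ0 τ1 k0 hk0 V V' hVder hV'cont hV0

end Modes
end
end

section
/- Assume in addition that V is continuously differentiable with V(τ₀) = 0. Then for every τ ∈ [τ₀, τ₁]: χ⁰(τ)·conj(χ²(τ)) + χ¹(τ)·conj(χ¹(τ)) + χ²(τ)·conj(χ⁰(τ)) = k₀^{-3} ∫_{τ₀}^τ sin(k₀(η−τ)) V(η) ( ∫_{τ₀}^η sin(k₀(2ξ−η−τ)) V(ξ) dξ ) dη = (2k₀⁴)^{-1} ∫_{τ₀}^τ sin(k₀(η−τ)) V(η) ( ∫_{τ₀}^η cos(k₀(2ξ−η−τ)) V'(ξ) dξ − cos(k₀(η−τ)) V(η) ) dη. -/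
/-!
With `K τ η = k₀⁻¹ sin(k₀(η−τ)) V(η)` we have `χ¹(τ) = ∫ K τ η χ⁰(η) dη`, and each of the three
products is an iterated integral over `τ₀ ≤ ξ ≤ η ≤ τ`: for `χ² conj χ⁰` by definition, for
`|χ¹|²` by the product rule `(∫ p)(∫ q) = ∫ (p ∫ q + (∫ p) q)`. In the sum, `χ⁰` only enters
through `χ⁰(x) conj χ⁰(y) + χ⁰(y) conj χ⁰(x) = k₀⁻¹ cos(k₀(x−y))`, and the addition theorem
`sin(k₀(ξ−η)) cos(k₀(ξ−τ)) + cos(k₀(ξ−η)) sin(k₀(ξ−τ)) = sin(k₀(2ξ−η−τ))` collapses the integrand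
to the first formula. Integrating the inner integral by parts gives the second one; the boundary
term at `τ₀` vanishes because `V(τ₀) = 0`. Only the values of `V` on `[τ₀, τ₁]` matter, so `V` may
be replaced by a continuous extension to `ℝ`.
-/

open MeasureTheory Filter Set Topology

noncomputable section

open scoped ComplexConjugate

theorem Set.uIcc_subset_Icc_of_mem {α : Type*} [Lattice α] {a b t : α} (ht : t ∈ Icc a b) :
    uIcc a t ⊆ Icc a b :=
  uIcc_subset_Icc (left_mem_Icc.2 (ht.1.trans ht.2)) ht

namespace intervalIntegral

theorem integral_mul_integral {A : Type*} [NormedRing A]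
    [NormedAlgebra ℝ A] [CompleteSpace A] {p q : ℝ → A} (hp : Continuous p) (hq : Continuous q)
    (a b : ℝ) :
    (∫ x in a..b, p x) * (∫ x in a..b, q x)
      = ∫ x in a..b, (p x * ∫ y in a..x, q y) + (∫ y in a..x, p y) * q x := by
  have hP : ∀ x, HasDerivAt (fun t => ∫ y in a..t, p y) (p x) x := fun x =>
    (hp.integral_hasStrictDerivAt a x).hasDerivAt
  have hQ : ∀ x, HasDerivAt (fun t => ∫ y in a..t, q y) (q x) x := fun x =>
    (hq.integral_hasStrictDerivAt a x).hasDerivAt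
  rw [integral_deriv_mul_eq_sub_of_hasDerivWithinAt
    (fun x _ => (hP x).hasDerivWithinAt) (fun x _ => (hQ x).hasDerivWithinAt)
    (hp.intervalIntegrable a b) (hq.intervalIntegrable a b)]
  simp

theorem integral_integral_add {E : Type*} [NormedAddCommGroup E] [NormedSpace ℝ E]
    {K L : ℝ → ℝ → E} (hK : Continuous fun p : ℝ × ℝ => K p.1 p.2)
    (hL : Continuous fun p : ℝ × ℝ => L p.1 p.2) (a b : ℝ) :
    (∫ x in a..b, ∫ y in a..x, K x y) + (∫ x in a..b, ∫ y in a..x, L x y)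
      = ∫ x in a..b, ∫ y in a..x, (K x y + L x y) := by
  have hKx : ∀ x, Continuous (K x) := fun x => hK.comp (Continuous.prodMk_right x)
  have hLx : ∀ x, Continuous (L x) := fun x => hL.comp (Continuous.prodMk_right x)
  have hK' : Continuous fun x => ∫ y in a..x, K x y :=
    continuous_parametric_intervalIntegral_of_continuous hK continuous_id
  have hL' : Continuous fun x => ∫ y in a..x, L x y :=
    continuous_parametric_intervalIntegral_of_continuous hL continuous_id
  rw [← integral_add (hK'.intervalIntegrable a b) (hL'.intervalIntegrable a b)]
  exact integral_congr fun x _ =>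
    (integral_add ((hKx x).intervalIntegrable a x) ((hLx x).intervalIntegrable a x)).symm

theorem integral_cos_mul_deriv {a b ω : ℝ} {φ f f' : ℝ → ℝ} (hφ : ∀ x, HasDerivAt φ ω x)
    (hf : ∀ x ∈ uIcc a b, HasDerivWithinAt f (f' x) (uIcc a b) x)
    (hf' : IntervalIntegrable f' volume a b) :
    ∫ x in a..b, Real.cos (φ x) * f' x
      = Real.cos (φ b) * f b - Real.cos (φ a) * f a + ω * ∫ x in a..b, Real.sin (φ x) * f x := by
  have hφc : Continuous φ := continuous_iff_continuousAt.2 fun x => (hφ x).continuousAt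
  have hcos : ∀ x ∈ uIcc a b, HasDerivWithinAt (fun x => Real.cos (φ x))
      (-Real.sin (φ x) * ω) (uIcc a b) x := fun x _ => ((hφ x).cos).hasDerivWithinAt
  rw [integral_mul_deriv_eq_deriv_mul_of_hasDerivWithinAt hcos hf
    ((by fun_prop : Continuous fun x => -Real.sin (φ x) * ω).intervalIntegrable a b) hf',
    ← integral_const_mul, sub_eq_add_neg, ← integral_neg]
  congr 2
  exact funext fun x => by ring

end intervalIntegral

namespace Modes

section

variable {k0 τ0 : ℝ} {V : ℝ → ℝ}

def kernel (k0 : ℝ) (V : ℝ → ℝ) (τ η : ℝ) : ℂ :=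
  ((k0⁻¹ * Real.sin (k0 * (η - τ)) * V η : ℝ) : ℂ)

lemma chi_succ (n : ℕ) (τ : ℝ) :
    chi k0 τ0 V (n + 1) τ = ∫ η in τ0..τ, kernel k0 V τ η * chi k0 τ0 V n η := rfl

lemma conj_kernel (τ η : ℝ) : conj (kernel k0 V τ η) = kernel k0 V τ η :=
  Complex.conj_ofReal _

lemma continuous_kernel (hV : Continuous V) : Continuous (Function.uncurry (kernel k0 V)) := by
  unfold kernel; fun_prop

@[fun_prop]
lemma continuous_chi_zero : Continuous (chi k0 τ0 V 0) := by
  unfold chi; fun_prop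

lemma chi_zero_mul_conj (hk0 : 0 < k0) (x y : ℝ) :
    chi k0 τ0 V 0 x * conj (chi k0 τ0 V 0 y)
      = ((2 * k0)⁻¹ : ℝ) * Complex.exp (↑(k0 * (x - y)) * Complex.I) := by
  have hsqrt : (Real.sqrt (2 * k0) : ℂ) * Real.sqrt (2 * k0) = ((2 * k0 : ℝ) : ℂ) := by
    rw [← Complex.ofReal_mul, Real.mul_self_sqrt (by positivity)]
  simp only [chi, map_mul, map_inv₀, Complex.conj_ofReal, ← Complex.exp_conj, Complex.conj_I]
  rw [mul_mul_mul_comm, ← mul_inv, hsqrt, ← Complex.exp_add]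
  push_cast
  ring_nf

lemma chi_zero_mul_conj_add (hk0 : 0 < k0) (x y : ℝ) :
    chi k0 τ0 V 0 x * conj (chi k0 τ0 V 0 y) + chi k0 τ0 V 0 y * conj (chi k0 τ0 V 0 x)
      = ((k0⁻¹ * Real.cos (k0 * (x - y)) : ℝ) : ℂ) := by
  have hswap : chi k0 τ0 V 0 y * conj (chi k0 τ0 V 0 x)
      = conj (chi k0 τ0 V 0 x * conj (chi k0 τ0 V 0 y)) := by
    rw [map_mul, Complex.conj_conj, mul_comm]
  rw [hswap, Complex.add_conj, chi_zero_mul_conj hk0, Complex.re_ofReal_mul,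
    Complex.exp_ofReal_mul_I_re]
  congr 1
  field_simp

lemma chi_two_mul_conj_chi_zero (τ : ℝ) :
    chi k0 τ0 V 2 τ * conj (chi k0 τ0 V 0 τ)
      = ∫ η in τ0..τ, ∫ ξ in τ0..η,
          kernel k0 V τ η * kernel k0 V η ξ * (chi k0 τ0 V 0 ξ * conj (chi k0 τ0 V 0 τ)) := by
  rw [chi_succ, ← intervalIntegral.integral_mul_const]
  refine intervalIntegral.integral_congr fun η _ => ?_
  rw [chi_succ, mul_assoc, ← intervalIntegral.integral_mul_const,
    ← intervalIntegral.integral_const_mul]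
  exact intervalIntegral.integral_congr fun ξ _ => by ring

lemma chi_one_mul_conj_chi_one (hV : Continuous V) (τ : ℝ) :
    chi k0 τ0 V 1 τ * conj (chi k0 τ0 V 1 τ)
      = ∫ η in τ0..τ, ∫ ξ in τ0..η, kernel k0 V τ η * kernel k0 V τ ξ *
          (chi k0 τ0 V 0 η * conj (chi k0 τ0 V 0 ξ)
            + chi k0 τ0 V 0 ξ * conj (chi k0 τ0 V 0 η)) := by
  have hf : Continuous fun η => kernel k0 V τ η * chi k0 τ0 V 0 η :=
    ((continuous_kernel hV).comp (Continuous.prodMk_right τ)).mul continuous_chi_zero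
  have hfc : Continuous fun η => conj (kernel k0 V τ η * chi k0 τ0 V 0 η) :=
    Complex.continuous_conj.comp hf
  rw [chi_succ, ← intervalIntegral.intervalIntegral_conj,
    intervalIntegral.integral_mul_integral hf hfc]
  refine intervalIntegral.integral_congr fun η _ => ?_
  rw [← intervalIntegral.integral_const_mul, ← intervalIntegral.integral_mul_const,
    ← intervalIntegral.integral_add ((hfc.const_mul _).intervalIntegrable _ _)
      ((hf.mul_const _).intervalIntegrable _ _)]
  refine intervalIntegral.integral_congr fun ξ _ => ?_
  simp only [map_mul, conj_kernel]
  ring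

lemma second_order_integrand_eq (hk0 : 0 < k0) (τ η ξ : ℝ) :
    conj (kernel k0 V τ η * kernel k0 V η ξ * (chi k0 τ0 V 0 ξ * conj (chi k0 τ0 V 0 τ)))
        + kernel k0 V τ η * kernel k0 V τ ξ *
          (chi k0 τ0 V 0 η * conj (chi k0 τ0 V 0 ξ) + chi k0 τ0 V 0 ξ * conj (chi k0 τ0 V 0 η))
        + kernel k0 V τ η * kernel k0 V η ξ * (chi k0 τ0 V 0 ξ * conj (chi k0 τ0 V 0 τ))
      = (((k0 ^ 3)⁻¹ * (Real.sin (k0 * (η - τ)) * V η *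
          (Real.sin (k0 * (2 * ξ - η - τ)) * V ξ)) : ℝ) : ℂ) := by
  have hξτ := chi_zero_mul_conj_add (τ0 := τ0) (V := V) hk0 ξ τ
  have hηξ := chi_zero_mul_conj_add (τ0 := τ0) (V := V) hk0 η ξ
  have hsin : Real.sin (k0 * (2 * ξ - η - τ))
      = Real.sin (k0 * (ξ - η)) * Real.cos (k0 * (ξ - τ))
        + Real.cos (k0 * (η - ξ)) * Real.sin (k0 * (ξ - τ)) := by
    rw [show k0 * (2 * ξ - η - τ) = k0 * (ξ - η) + k0 * (ξ - τ) by ring, Real.sin_add,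
      show k0 * (η - ξ) = -(k0 * (ξ - η)) by ring, Real.cos_neg]
  calc _ = kernel k0 V τ η * kernel k0 V η ξ * ((k0⁻¹ * Real.cos (k0 * (ξ - τ)) : ℝ) : ℂ)
        + kernel k0 V τ η * kernel k0 V τ ξ * ((k0⁻¹ * Real.cos (k0 * (η - ξ)) : ℝ) : ℂ) := by
        rw [← hξτ, ← hηξ]
        simp only [map_mul, conj_kernel, Complex.conj_conj]
        ring
    _ = _ := by
        rw [hsin]
        simp only [kernel]
        push_cast
        ring

theorem second_order_sum_of_continuous (hk0 : 0 < k0) (hV : Continuous V) (τ : ℝ) :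
    chi k0 τ0 V 0 τ * conj (chi k0 τ0 V 2 τ)
        + chi k0 τ0 V 1 τ * conj (chi k0 τ0 V 1 τ)
        + chi k0 τ0 V 2 τ * conj (chi k0 τ0 V 0 τ)
      = (((k0 ^ 3)⁻¹ * ∫ η in τ0..τ, Real.sin (k0 * (η - τ)) * V η *
            ∫ ξ in τ0..η, Real.sin (k0 * (2 * ξ - η - τ)) * V ξ : ℝ) : ℂ) := by
  have hconj : chi k0 τ0 V 0 τ * conj (chi k0 τ0 V 2 τ)
      = ∫ η in τ0..τ, ∫ ξ in τ0..η, conj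
          (kernel k0 V τ η * kernel k0 V η ξ * (chi k0 τ0 V 0 ξ * conj (chi k0 τ0 V 0 τ))) := by
    simp_rw [intervalIntegral.intervalIntegral_conj]
    rw [← chi_two_mul_conj_chi_zero, map_mul, Complex.conj_conj, mul_comm]
  have hK := continuous_kernel (k0 := k0) hV
  rw [hconj, chi_one_mul_conj_chi_one hV, chi_two_mul_conj_chi_zero,
    intervalIntegral.integral_integral_add (by fun_prop) (by fun_prop),
    intervalIntegral.integral_integral_add (by fun_prop) (by fun_prop)]
  simp_rw [← intervalIntegral.integral_const_mul, intervalIntegral.integral_ofReal.symm]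
  refine intervalIntegral.integral_congr fun η _ => intervalIntegral.integral_congr fun ξ _ => ?_
  exact second_order_integrand_eq hk0 τ η ξ

lemma chi_eqOn_of_eqOn {τ1 : ℝ} {W : ℝ → ℝ} (h : EqOn V W (Icc τ0 τ1)) (n : ℕ) :
    EqOn (chi k0 τ0 V n) (chi k0 τ0 W n) (Icc τ0 τ1) := by
  induction n with
  | zero => exact fun _ _ => rfl
  | succ n ih =>
    intro t ht
    refine intervalIntegral.integral_congr fun η hη => ?_
    have hη' : η ∈ Icc τ0 τ1 := uIcc_subset_Icc_of_mem ht hη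
    simp only [h hη', ih hη']

theorem second_order_sum (hk0 : 0 < k0) {τ1 : ℝ} (hV : ContinuousOn V (Icc τ0 τ1)) {τ : ℝ}
    (hτ : τ ∈ Icc τ0 τ1) :
    chi k0 τ0 V 0 τ * conj (chi k0 τ0 V 2 τ)
        + chi k0 τ0 V 1 τ * conj (chi k0 τ0 V 1 τ)
        + chi k0 τ0 V 2 τ * conj (chi k0 τ0 V 0 τ)
      = (((k0 ^ 3)⁻¹ * ∫ η in τ0..τ, Real.sin (k0 * (η - τ)) * V η *
            ∫ ξ in τ0..η, Real.sin (k0 * (2 * ξ - η - τ)) * V ξ : ℝ) : ℂ) := by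
  have h01 : τ0 ≤ τ1 := hτ.1.trans hτ.2
  set W := IccExtend h01 ((Icc τ0 τ1).domRestrict V)
  have hW : Continuous W :=
    continuous_IccExtend_iff.mpr (continuousOn_iff_continuous_domRestrict.mp hV)
  have hVW : EqOn V W (Icc τ0 τ1) := fun x hx => by
    simp only [W, IccExtend_of_mem h01 _ hx, domRestrict_apply]
  simp only [chi_eqOn_of_eqOn hVW _ hτ, second_order_sum_of_continuous hk0 hW]
  congr 2
  refine intervalIntegral.integral_congr fun η hη => ?_
  have hη := uIcc_subset_Icc_of_mem hτ hη
  congr 1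
  · rw [hVW hη]
  · exact intervalIntegral.integral_congr fun ξ hξ => by rw [hVW (uIcc_subset_Icc_of_mem hη hξ)]

lemma integral_cos_mul_deriv_sub {τ1 : ℝ} {V' : ℝ → ℝ}
    (hVder : ∀ τ ∈ Icc τ0 τ1, HasDerivWithinAt V (V' τ) (Icc τ0 τ1) τ)
    (hV'cont : ContinuousOn V' (Icc τ0 τ1)) (hV0 : V τ0 = 0) (τ : ℝ) {η : ℝ}
    (hη : η ∈ Icc τ0 τ1) :
    (∫ ξ in τ0..η, Real.cos (k0 * (2 * ξ - η - τ)) * V' ξ) - Real.cos (k0 * (η - τ)) * V η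
      = 2 * k0 * ∫ ξ in τ0..η, Real.sin (k0 * (2 * ξ - η - τ)) * V ξ := by
  have hsub := uIcc_subset_Icc_of_mem hη
  have hφ : ∀ ξ, HasDerivAt (fun ξ => k0 * (2 * ξ - η - τ)) (2 * k0) ξ := fun ξ =>
    ((((hasDerivAt_id' ξ).const_mul 2).sub_const η).sub_const τ).const_mul k0
      |>.congr_deriv (by ring)
  rw [intervalIntegral.integral_cos_mul_deriv hφ (fun ξ hξ => (hVder ξ (hsub hξ)).mono hsub)
    ((hV'cont.mono hsub).intervalIntegrable), hV0]
  ring_nf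

end

theorem second_order_term_general (τ0 τ1 k0 : ℝ) (hk0 : 0 < k0)
    (V V' : ℝ → ℝ)
    (hVder : ∀ τ ∈ Set.Icc τ0 τ1, HasDerivWithinAt V (V' τ) (Set.Icc τ0 τ1) τ)
    (hV'cont : ContinuousOn V' (Set.Icc τ0 τ1))
    (hV0 : V τ0 = 0) :
    ∀ τ ∈ Set.Icc τ0 τ1,
      chi k0 τ0 V 0 τ * (starRingEnd ℂ) (chi k0 τ0 V 2 τ)
          + chi k0 τ0 V 1 τ * (starRingEnd ℂ) (chi k0 τ0 V 1 τ)
          + chi k0 τ0 V 2 τ * (starRingEnd ℂ) (chi k0 τ0 V 0 τ)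
        = (((k0 ^ 3)⁻¹ * ∫ η in τ0..τ, Real.sin (k0 * (η - τ)) * V η *
              ∫ ξ in τ0..η, Real.sin (k0 * (2 * ξ - η - τ)) * V ξ : ℝ) : ℂ) ∧
      chi k0 τ0 V 0 τ * (starRingEnd ℂ) (chi k0 τ0 V 2 τ)
          + chi k0 τ0 V 1 τ * (starRingEnd ℂ) (chi k0 τ0 V 1 τ)
          + chi k0 τ0 V 2 τ * (starRingEnd ℂ) (chi k0 τ0 V 0 τ)
        = (((2 * k0 ^ 4)⁻¹ * ∫ η in τ0..τ, Real.sin (k0 * (η - τ)) * V η *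
              ((∫ ξ in τ0..η, Real.cos (k0 * (2 * ξ - η - τ)) * V' ξ)
                - Real.cos (k0 * (η - τ)) * V η) : ℝ) : ℂ) := by
  intro τ hτ
  have hV : ContinuousOn V (Set.Icc τ0 τ1) := fun x hx => (hVder x hx).continuousWithinAt
  refine ⟨second_order_sum hk0 hV hτ, (second_order_sum hk0 hV hτ).trans ?_⟩
  congr 1
  rw [← intervalIntegral.integral_const_mul, ← intervalIntegral.integral_const_mul]
  refine intervalIntegral.integral_congr fun η hη => ?_
  rw [integral_cos_mul_deriv_sub hVder hV'cont hV0 τ (uIcc_subset_Icc_of_mem hτ hη)]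
  field_simp

/-- **The second-order term of the mode expansion** (second order computation in
Pinamonti–Siemssen, Proposition 2.1): for `V` continuously differentiable with `V(τ₀) = 0`,
`χ⁰ conj(χ²) + |χ¹|² + χ² conj(χ⁰)
  = k₀⁻³ ∫ sin(k₀(η−τ)) V(η) (∫_{τ₀}^η sin(k₀(2ξ−η−τ)) V(ξ) dξ) dη
  = (2k₀⁴)⁻¹ ∫ sin(k₀(η−τ)) V(η) (∫_{τ₀}^η cos(k₀(2ξ−η−τ)) V'(ξ) dξ − cos(k₀(η−τ)) V(η)) dη`. -/
theorem second_order_term (τ0 τ1 k0 : ℝ) (hτ : τ0 < τ1) (hk0 : 0 < k0)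
    (V V' : ℝ → ℝ)
    (hVder : ∀ τ ∈ Set.Icc τ0 τ1, HasDerivWithinAt V (V' τ) (Set.Icc τ0 τ1) τ)
    (hV'cont : ContinuousOn V' (Set.Icc τ0 τ1))
    (hV0 : V τ0 = 0) :
    ∀ τ ∈ Set.Icc τ0 τ1,
      chi k0 τ0 V 0 τ * (starRingEnd ℂ) (chi k0 τ0 V 2 τ)
          + chi k0 τ0 V 1 τ * (starRingEnd ℂ) (chi k0 τ0 V 1 τ)
          + chi k0 τ0 V 2 τ * (starRingEnd ℂ) (chi k0 τ0 V 0 τ)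
        = (((k0 ^ 3)⁻¹ * ∫ η in τ0..τ, Real.sin (k0 * (η - τ)) * V η *
              ∫ ξ in τ0..η, Real.sin (k0 * (2 * ξ - η - τ)) * V ξ : ℝ) : ℂ) ∧
      chi k0 τ0 V 0 τ * (starRingEnd ℂ) (chi k0 τ0 V 2 τ)
          + chi k0 τ0 V 1 τ * (starRingEnd ℂ) (chi k0 τ0 V 1 τ)
          + chi k0 τ0 V 2 τ * (starRingEnd ℂ) (chi k0 τ0 V 0 τ)
        = (((2 * k0 ^ 4)⁻¹ * ∫ η in τ0..τ, Real.sin (k0 * (η - τ)) * V η *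
              ((∫ ξ in τ0..η, Real.cos (k0 * (2 * ξ - η - τ)) * V' ξ)
                - Real.cos (k0 * (η - τ)) * V η) : ℝ) : ℂ) :=
  second_order_term_general τ0 τ1 k0 hk0 V V' hVder hV'cont hV0

end Modes
end
end

section
/- For every real x > 0, the complex integral ∫₀¹ ( i x − ln(1 − s) )^{-1} ds exists and its modulus satisfies | ∫₀¹ ( i x − ln(1 − s) )^{-1} ds | ≤ ln( (1 + √(1 + x²)) / x ). -/
open MeasureTheory Set

/-! The integrand has modulus `(x² + ln²(1-s))^{-1/2}`, and `s ≤ -ln(1-s)` on `[0,1)`, so it is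
dominated by `(x² + s²)^{-1/2}`, whose integral over `[0,1]` is `arsinh (1/x)`, i.e. the
right-hand side. -/

namespace Complex

theorem norm_I_mul_ofReal_sub_ofReal_inv (x y : ℝ) :
    ‖(I * x - y)⁻¹‖ = (√(x ^ 2 + y ^ 2))⁻¹ := by
  rw [norm_inv, norm_def, normSq_apply]
  congr 2
  simp
  ring

end Complex

namespace Real

theorem sq_le_log_one_sub_sq {s : ℝ} (hs₀ : 0 ≤ s) (hs₁ : s < 1) :
    s ^ 2 ≤ log (1 - s) ^ 2 := by
  have : log (1 - s) ≤ -s := by linarith [log_le_sub_one_of_pos (sub_pos.2 hs₁)]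
  nlinarith

theorem hasDerivAt_arsinh_div {x : ℝ} (hx : 0 < x) (s : ℝ) :
    HasDerivAt (fun t => arsinh (t / x)) (√(x ^ 2 + s ^ 2))⁻¹ s := by
  have hsqrt : √(1 + (s / x) ^ 2) * x = √(x ^ 2 + s ^ 2) := by
    nth_rewrite 2 [← sqrt_sq hx.le]
    rw [← sqrt_mul (by positivity)]
    congr 1
    field_simp
  convert ((hasDerivAt_id' s).div_const x).arsinh using 1
  rw [← hsqrt, mul_inv, smul_eq_mul, one_div]

theorem continuous_inv_sqrt_sq_add_sq {x : ℝ} (hx : x ≠ 0) :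
    Continuous fun s : ℝ => (√(x ^ 2 + s ^ 2))⁻¹ :=
  (continuous_const.add (continuous_pow 2)).sqrt.inv₀
    fun s => (sqrt_pos.2 (add_pos_of_pos_of_nonneg (sq_pos_of_ne_zero hx) (sq_nonneg s))).ne'

theorem integral_inv_sqrt_sq_add_sq {x : ℝ} (hx : 0 < x) (a b : ℝ) :
    ∫ s in a..b, (√(x ^ 2 + s ^ 2))⁻¹ = arsinh (b / x) - arsinh (a / x) :=
  intervalIntegral.integral_eq_sub_of_hasDerivAt (fun s _ => hasDerivAt_arsinh_div hx s)
    ((continuous_inv_sqrt_sq_add_sq hx.ne').intervalIntegrable a b)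

theorem arsinh_inv {x : ℝ} (hx : 0 < x) : arsinh x⁻¹ = log ((1 + √(1 + x ^ 2)) / x) := by
  have hsqrt : √(1 + x⁻¹ ^ 2) = √(1 + x ^ 2) / x := by
    rw [show 1 + x⁻¹ ^ 2 = (1 + x ^ 2) / x ^ 2 by field_simp; ring, sqrt_div (by positivity),
      sqrt_sq hx.le]
  rw [arsinh, hsqrt]
  field_simp

end Real

open Complex in
theorem norm_I_mul_ofReal_sub_log_one_sub_inv_le (x : ℝ) {s : ℝ} (hs : s ∈ Ioo 0 1) :
    ‖(I * x - (Real.log (1 - s) : ℂ))⁻¹‖ ≤ (√(x ^ 2 + s ^ 2))⁻¹ := by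
  obtain ⟨hs₀, hs₁⟩ := hs
  rw [norm_I_mul_ofReal_sub_ofReal_inv]
  exact inv_anti₀ (by positivity)
    (Real.sqrt_le_sqrt (by linarith [Real.sq_le_log_one_sub_sq hs₀.le hs₁]))

/-- **Bound on the exponential integral along the imaginary axis** (Pinamonti–Siemssen,
proof of Proposition 2.1): for real `x > 0` the integral `∫₀¹ (ix − ln(1−s))⁻¹ ds` exists
and `|∫₀¹ (ix − ln(1−s))⁻¹ ds| ≤ ln((1 + √(1+x²))/x)`. -/
theorem exponential_integral_bound (x : ℝ) (hx : 0 < x) :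
    IntervalIntegrable
        (fun s : ℝ => (Complex.I * (x : ℂ) - ((Real.log (1 - s) : ℝ) : ℂ))⁻¹)
        MeasureTheory.volume 0 1 ∧
      ‖∫ s in (0:ℝ)..1, (Complex.I * (x : ℂ) - ((Real.log (1 - s) : ℝ) : ℂ))⁻¹‖
        ≤ Real.log ((1 + Real.sqrt (1 + x ^ 2)) / x) := by
  have hbound : ∀ᵐ s ∂volume.restrict (uIoc 0 1),
      ‖(Complex.I * x - (Real.log (1 - s) : ℂ))⁻¹‖ ≤ (√(x ^ 2 + s ^ 2))⁻¹ := by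
    rw [uIoc_of_le zero_le_one, ← restrict_Ioo_eq_restrict_Ioc]
    exact ae_restrict_of_forall_mem measurableSet_Ioo
      fun s hs => norm_I_mul_ofReal_sub_log_one_sub_inv_le x hs
  have hg : IntervalIntegrable (fun s : ℝ => (√(x ^ 2 + s ^ 2))⁻¹) volume 0 1 :=
    (Real.continuous_inv_sqrt_sq_add_sq hx.ne').intervalIntegrable 0 1
  have hmeas : AEStronglyMeasurable (fun s : ℝ => (Complex.I * x - (Real.log (1 - s) : ℂ))⁻¹)
      (volume.restrict (uIoc 0 1)) :=
    (by fun_prop : Measurable _).aestronglyMeasurable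
  refine ⟨hg.mono_fun' hmeas hbound, ?_⟩
  calc _ ≤ |∫ s in (0:ℝ)..1, (√(x ^ 2 + s ^ 2))⁻¹| :=
        intervalIntegral.norm_integral_le_abs_of_norm_le hbound hg
    _ = Real.arsinh x⁻¹ := by
        rw [Real.integral_inv_sqrt_sq_add_sq hx, zero_div, Real.arsinh_zero, sub_zero, one_div,
          abs_of_nonneg (Real.arsinh_nonneg_iff.2 (by positivity))]
    _ = _ := Real.arsinh_inv hx
end

section
/- Let x be a complex number with Re x ≥ 0 and x ≠ 0. Then the improper integral ∫₁^∞ t^{-1} e^{-x t} dt converges (as the limit of ∫₁^T for T → ∞) and equals ∫₀¹ e^{-x} ( x − ln(1 − s) )^{-1} ds, where ln denotes the real natural logarithm of the real number 1 − s ∈ (0,1]. In particular, both expressions equal the exponential integral E₁(x). -/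
/-!
Writing `t⁻¹ = ∫₀^∞ e^{-tv} dv` and swapping the (absolutely convergent) integrals over
`[1, T] × (0, ∞)` turns `∫₁^T t⁻¹ e^{-xt} dt` into `∫₀^∞ ∫₁^T e^{-(x+v)t} dt dv`. The inner
integral is explicit and bounded by `2 e^{-v} / |x|`, because `|x + v| ≥ |x|` when `Re x ≥ 0`;
so dominated convergence lets `T → ∞` even when `Re x = 0`, giving `∫₀^∞ e^{-(x+v)} / (x+v) dv`.
The substitution `s = 1 - e^{-v}` turns this into the integral over `[0, 1]`.
-/

open MeasureTheory Filter Set Topology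

section LogSubstitution

variable {E : Type*} [NormedAddCommGroup E] [NormedSpace ℝ E]

lemma image_one_sub_exp_neg_Ioi : (fun u => 1 - Real.exp (-u)) '' Ioi 0 = Ioo 0 1 := by
  have : (fun u => 1 - Real.exp (-u)) = (fun s => 1 - s) ∘ Real.exp ∘ Neg.neg := rfl
  rw [this, image_comp, image_comp, image_neg_Ioi, neg_zero, Real.image_exp_Iio, Real.exp_zero,
    image_const_sub_Ioo, sub_zero, sub_self]

lemma hasDerivAt_one_sub_exp_neg (u : ℝ) :
    HasDerivAt (fun u => 1 - Real.exp (-u)) (Real.exp (-u)) u := by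
  simpa using ((Real.hasDerivAt_exp (-u)).comp u (hasDerivAt_neg u)).const_sub 1

lemma injective_one_sub_exp_neg : Function.Injective (fun u => 1 - Real.exp (-u)) := by
  intro a b h
  simpa using h

lemma abs_exp_neg_smul_comp_neg_log_one_sub (f : ℝ → E) (u : ℝ) :
    |Real.exp (-u)| • f (-Real.log (1 - (1 - Real.exp (-u)))) = Real.exp (-u) • f u := by
  rw [sub_sub_cancel, Real.log_exp, neg_neg, abs_of_pos (Real.exp_pos _)]

theorem intervalIntegrable_comp_neg_log_one_sub_iff {f : ℝ → E} :
    IntervalIntegrable (fun s => f (-Real.log (1 - s))) volume 0 1 ↔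
      IntegrableOn (fun u => Real.exp (-u) • f u) (Ioi 0) := by
  rw [intervalIntegrable_iff_integrableOn_Ioo_of_le zero_le_one, ← image_one_sub_exp_neg_Ioi,
    integrableOn_image_iff_integrableOn_abs_deriv_smul measurableSet_Ioi
      (fun u _ => (hasDerivAt_one_sub_exp_neg u).hasDerivWithinAt)
      injective_one_sub_exp_neg.injOn]
  simp only [abs_exp_neg_smul_comp_neg_log_one_sub]

theorem intervalIntegral_comp_neg_log_one_sub (f : ℝ → E) :
    ∫ s in (0:ℝ)..1, f (-Real.log (1 - s)) = ∫ u in Ioi 0, Real.exp (-u) • f u := by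
  rw [intervalIntegral.integral_of_le zero_le_one, integral_Ioc_eq_integral_Ioo,
    ← image_one_sub_exp_neg_Ioi,
    integral_image_eq_integral_abs_deriv_smul measurableSet_Ioi
      (fun u _ => (hasDerivAt_one_sub_exp_neg u).hasDerivWithinAt)
      injective_one_sub_exp_neg.injOn]
  simp only [abs_exp_neg_smul_comp_neg_log_one_sub]

end LogSubstitution

section ExponentialKernel

variable {x : ℂ}

lemma Complex.norm_le_norm_add_ofReal (hre : 0 ≤ x.re) {u : ℝ} (hu : 0 ≤ u) :
    ‖x‖ ≤ ‖x + u‖ := by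
  rw [Complex.norm_def, Complex.norm_def]
  apply Real.sqrt_le_sqrt
  simp only [Complex.normSq_apply, Complex.add_re, Complex.add_im, Complex.ofReal_re,
    Complex.ofReal_im, add_zero]
  nlinarith

lemma norm_cexp_neg_add_mul_div_le (hre : 0 ≤ x.re) (hx : x ≠ 0) {v s : ℝ} (hv : 0 ≤ v)
    (hs : 0 ≤ s) : ‖Complex.exp (-(x + v) * s) / (x + v)‖ ≤ Real.exp (-s * v) / ‖x‖ := by
  rw [norm_div, Complex.norm_exp]
  gcongr
  · simp only [Complex.mul_re, Complex.neg_re, Complex.add_re, Complex.ofReal_re,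
      Complex.neg_im, Complex.add_im, Complex.ofReal_im]
    nlinarith
  · exact Complex.norm_le_norm_add_ofReal hre hv

lemma integrableOn_cexp_neg_add_mul_div (hre : 0 ≤ x.re) (hx : x ≠ 0) {a : ℝ} (ha : 0 < a) :
    IntegrableOn (fun v : ℝ => Complex.exp (-(x + v) * a) / (x + v)) (Ioi 0) := by
  refine ((exp_neg_integrableOn_Ioi 0 ha).div_const ‖x‖).mono'
    (by fun_prop : Measurable _).aestronglyMeasurable ?_
  filter_upwards [ae_restrict_mem measurableSet_Ioi] with v hv
  exact norm_cexp_neg_add_mul_div_le hre hx hv.out.le ha.le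

lemma integral_Ioi_cexp_neg_add_mul (x : ℂ) {t : ℝ} (ht : 0 < t) :
    ∫ v in Ioi (0:ℝ), Complex.exp (-(x + v) * t) = (t:ℂ)⁻¹ * Complex.exp (-x * t) := by
  have hsplit : ∀ v : ℝ, Complex.exp (-(x + v) * t) =
      Complex.exp (-x * t) * Complex.exp (-(t:ℂ) * v) := by
    intro v
    rw [← Complex.exp_add]
    ring_nf
  simp_rw [hsplit]
  rw [integral_const_mul, integral_exp_mul_complex_Ioi (by simpa using ht)]
  simp only [Complex.ofReal_zero, mul_zero, Complex.exp_zero, neg_div_neg_eq, one_div]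
  ring

lemma integral_Ioi_cexp_neg_add_mul_eq_div (hre : 0 ≤ x.re) {v : ℝ} (hv : 0 < v) (a : ℝ) :
    ∫ t in Ioi a, Complex.exp (-(x + v) * t) = Complex.exp (-(x + v) * a) / (x + v) := by
  have hre' : (-(x + v)).re < 0 := by
    simp only [Complex.neg_re, Complex.add_re, Complex.ofReal_re]
    linarith
  rw [integral_exp_mul_complex_Ioi hre', neg_div_neg_eq]

lemma integrable_cexp_neg_add_mul_prod (hre : 0 ≤ x.re) {a b : ℝ} (ha : 0 < a) (hab : a ≤ b) :
    Integrable (Function.uncurry fun (t v : ℝ) => Complex.exp (-(x + v) * t))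
      ((volume.restrict (uIoc a b)).prod (volume.restrict (Ioi 0))) := by
  rw [uIoc_of_le hab]
  have hbound : Integrable (fun p : ℝ × ℝ => (1:ℝ) * Real.exp (-a * p.2))
      ((volume.restrict (Ioc a b)).prod (volume.restrict (Ioi 0))) :=
    (integrable_const 1).mul_prod (exp_neg_integrableOn_Ioi 0 ha)
  refine hbound.mono' (by fun_prop) ?_
  rw [Measure.prod_restrict]
  filter_upwards [ae_restrict_mem (measurableSet_Ioc.prod measurableSet_Ioi)]
    with ⟨t, v⟩ ⟨⟨hat, _⟩, hv⟩
  simp only [mem_Ioi] at hv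
  simp only [Function.uncurry_apply_pair, Complex.norm_exp, one_mul]
  gcongr
  simp only [Complex.mul_re, Complex.neg_re, Complex.add_re, Complex.ofReal_re,
    Complex.neg_im, Complex.add_im, Complex.ofReal_im]
  nlinarith

theorem intervalIntegral_inv_mul_cexp_eq_integral_Ioi (hre : 0 ≤ x.re) {a b : ℝ} (ha : 0 < a)
    (hab : a ≤ b) :
    ∫ t in a..b, (t:ℂ)⁻¹ * Complex.exp (-x * t) =
      ∫ v in Ioi (0:ℝ), ∫ t in a..b, Complex.exp (-(x + v) * t) := by
  rw [← intervalIntegral_integral_swap (integrable_cexp_neg_add_mul_prod hre ha hab)]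
  refine intervalIntegral.integral_congr fun t ht => ?_
  rw [uIcc_of_le hab] at ht
  exact (integral_Ioi_cexp_neg_add_mul x (ha.trans_le ht.1)).symm

lemma norm_intervalIntegral_cexp_neg_add_mul_le (hre : 0 ≤ x.re) (hx : x ≠ 0) {a T v : ℝ}
    (ha : 0 ≤ a) (hT : a ≤ T) (hv : 0 < v) :
    ‖∫ t in a..T, Complex.exp (-(x + v) * t)‖ ≤ 2 * Real.exp (-a * v) / ‖x‖ := by
  have hxv : x + v ≠ 0 := norm_pos_iff.mp
    ((norm_pos_iff.mpr hx).trans_le (Complex.norm_le_norm_add_ofReal hre hv.le))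
  rw [integral_exp_mul_complex (neg_ne_zero.mpr hxv)]
  calc ‖(Complex.exp (-(x + v) * T) - Complex.exp (-(x + v) * a)) / -(x + v)‖
      = ‖Complex.exp (-(x + v) * a) / (x + v) - Complex.exp (-(x + v) * T) / (x + v)‖ := by
        rw [div_neg, ← neg_div, neg_sub, sub_div]
    _ ≤ Real.exp (-a * v) / ‖x‖ + Real.exp (-T * v) / ‖x‖ :=
        (norm_sub_le _ _).trans (add_le_add
          (norm_cexp_neg_add_mul_div_le hre hx hv.le ha)
          (norm_cexp_neg_add_mul_div_le hre hx hv.le (ha.trans hT)))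
    _ ≤ 2 * Real.exp (-a * v) / ‖x‖ := by
        have : Real.exp (-T * v) ≤ Real.exp (-a * v) := by gcongr
        rw [two_mul, add_div]
        gcongr

theorem tendsto_integral_Ioi_intervalIntegral_cexp (hre : 0 ≤ x.re) (hx : x ≠ 0) {a : ℝ}
    (ha : 0 < a) :
    Tendsto (fun T => ∫ v in Ioi (0:ℝ), ∫ t in a..T, Complex.exp (-(x + v) * t)) atTop
      (𝓝 (∫ v in Ioi (0:ℝ), ∫ t in Ioi a, Complex.exp (-(x + v) * t))) := by
  refine tendsto_integral_filter_of_dominated_convergence (fun v => 2 * Real.exp (-a * v) / ‖x‖)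
    (.of_forall fun T => ?_) ?_ (((exp_neg_integrableOn_Ioi 0 ha).const_mul 2).div_const _) ?_
  · exact (intervalIntegral.continuous_parametric_intervalIntegral_of_continuous'
      (by fun_prop) a T).aestronglyMeasurable
  · filter_upwards [eventually_ge_atTop a] with T hT
    filter_upwards [ae_restrict_mem measurableSet_Ioi] with v hv
    exact norm_intervalIntegral_cexp_neg_add_mul_le hre hx ha.le hT hv
  · filter_upwards [ae_restrict_mem measurableSet_Ioi] with v hv
    refine intervalIntegral_tendsto_integral_Ioi a (integrableOn_exp_mul_complex_Ioi ?_ a) tendsto_id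
    simp only [Complex.neg_re, Complex.add_re, Complex.ofReal_re]
    linarith [hv.out]

end ExponentialKernel

/-- **Representation of the exponential integral `E₁`** (eq. (11) of Pinamonti–Siemssen):
for complex `x` with `Re x ≥ 0`, `x ≠ 0`, the improper integral `∫₁^∞ t⁻¹ e^{−xt} dt`
converges (as the limit of `∫₁^T` for `T → ∞`) and equals
`∫₀¹ e^{−x} (x − ln(1−s))⁻¹ ds`; both expressions equal `E₁(x)`. -/
theorem exponential_integral_representation (x : ℂ) (hre : 0 ≤ x.re) (hx : x ≠ 0) :
    IntervalIntegrable
        (fun s : ℝ => Complex.exp (-x) * (x - ((Real.log (1 - s) : ℝ) : ℂ))⁻¹)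
        MeasureTheory.volume 0 1 ∧
      Tendsto (fun T : ℝ => ∫ t in (1:ℝ)..T, ((t : ℂ))⁻¹ * Complex.exp (-x * (t : ℂ)))
        atTop
        (𝓝 (∫ s in (0:ℝ)..1, Complex.exp (-x) * (x - ((Real.log (1 - s) : ℝ) : ℂ))⁻¹)) := by
  set f : ℝ → ℂ := fun u => Complex.exp (-x) * (x + u)⁻¹
  have hlog : (fun s : ℝ => Complex.exp (-x) * (x - ((Real.log (1 - s) : ℝ) : ℂ))⁻¹) =
      fun s => f (-Real.log (1 - s)) := by
    funext s
    simp only [f]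
    push_cast
    ring_nf
  have hsmul : ∀ u : ℝ, Real.exp (-u) • f u = Complex.exp (-(x + u) * (1:ℝ)) / (x + u) := by
    intro u
    rw [Complex.real_smul, Complex.ofReal_exp, ← mul_assoc, ← Complex.exp_add, div_eq_mul_inv]
    push_cast
    ring_nf
  rw [hlog, intervalIntegrable_comp_neg_log_one_sub_iff, intervalIntegral_comp_neg_log_one_sub]
  simp_rw [hsmul]
  refine ⟨integrableOn_cexp_neg_add_mul_div hre hx one_pos, ?_⟩
  rw [← setIntegral_congr_fun measurableSet_Ioi
    fun v hv => integral_Ioi_cexp_neg_add_mul_eq_div hre hv.out 1]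
  refine (tendsto_integral_Ioi_intervalIntegral_cexp hre hx one_pos).congr' ?_
  filter_upwards [eventually_ge_atTop 1] with T hT
  exact (intervalIntegral_inv_mul_cexp_eq_integral_Ioi hre one_pos hT).symm
end
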